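/- arXiv:math/0607555 — 5 statements merged into one kernel-verified Lean document; each statement's English description precedes it below -/
import Mathlib

section
/- Let m ≤ M be integers such that every integer eigenvalue of a₋₁ is ≤ M. Suppose there exist n×n matrices b_m, …, b_M with b_m ≠ 0 satisfying ((k+1)I_n − a₋₁) b_{k+1} = Σ_{j=0}^{k−m} a_j b_{k−j} for every integer k with m−1 ≤ k ≤ M−1 (for k = m−1 the right-hand side is the empty sum, i.e. (m I_n − a₋₁) b_m = 0). Then the system dW/dx = A(x)W has a solution of form (2.2) with leading order m whose Laurent coefficients of index m, …, M are b_m, …, b_M. -/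
section Aux
variable {n : ℕ}
attribute [local instance] Matrix.linftyOpNormedAddCommGroup Matrix.linftyOpNormedSpace
  Matrix.linftyOpNormedRing Matrix.linftyOpNormedAlgebra Matrix.linftyOpIsBoundedSMul

noncomputable def dcoef (m M : ℤ) (aneg1 : Matrix (Fin n) (Fin n) ℂ)
    (a : ℕ → Matrix (Fin n) (Fin n) ℂ) (b : ℤ → Matrix (Fin n) (Fin n) ℂ) :
    ℕ → Matrix (Fin n) (Fin n) ℂ
  | t =>
    if (t : ℤ) + m ≤ M then b (m + t)
    else (((m + (t : ℤ) : ℤ) : ℂ) • (1 : Matrix (Fin n) (Fin n) ℂ) - aneg1)⁻¹ *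
      ∑ j ∈ (Finset.range t).attach, a j.1 * dcoef m M aneg1 a b (t - 1 - j.1)
  termination_by t => t
  decreasing_by
    · have := Finset.mem_range.mp j.2; omega

theorem normSummable {u : ℕ → Matrix (Fin n) (Fin n) ℂ} {aneg1 : Matrix (Fin n) (Fin n) ℂ}
    {a : ℕ → Matrix (Fin n) (Fin n) ℂ} (m : ℤ)
    (hsc : ∀ t : ℕ, ((m + (t : ℤ) : ℤ) : ℂ) • u t
      = aneg1 * u t + ∑ j ∈ Finset.range t, a j * u (t - 1 - j))
    {r K s : ℝ} (hr : 0 < r) (hK : ∀ j, ‖a j‖ * r ^ j ≤ K) (hs0 : 0 ≤ s) (hsr : s < r) :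
    Summable (fun t => ‖u t‖ * s ^ t) := by
  rcases eq_or_lt_of_le hs0 with hs | hs
  · apply summable_of_ne_finset_zero (s := {0})
    intro t ht
    simp only [Finset.mem_singleton] at ht
    rw [← hs, zero_pow ht, mul_zero]
  set q : ℝ := s / r with hq_def
  have hq0 : 0 < q := div_pos hs hr
  have hq1 : q < 1 := (div_lt_one hr).mpr hsr
  set l : ℝ := (1 + q) / 2 with hl_def
  have hql : q < l := by rw [hl_def]; linarith
  have hl1 : l < 1 := by rw [hl_def]; linarith
  have hK0 : 0 ≤ K := le_trans (by positivity) (hK 0)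
  set β : ℝ := ‖aneg1‖ with hβ_def
  have hβ0 : 0 ≤ β := norm_nonneg _
  set u' : ℕ → ℝ := fun t => ‖u t‖ * r ^ t with hu'_def
  have hu'0 : ∀ t, 0 ≤ u' t := fun t => by positivity
  set P : ℕ → ℝ := fun t => ∑ i ∈ Finset.range (t + 1), u' i with hP_def
  have hP0 : ∀ t, 0 ≤ P t := fun t => Finset.sum_nonneg fun i _ => hu'0 i
  have hu'P : ∀ t, u' t ≤ P t := fun t =>
    Finset.single_le_sum (fun i _ => hu'0 i) (Finset.self_mem_range_succ t)
  -- key step bound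
  have key : ∀ t : ℕ, 1 ≤ (m : ℝ) + (t + 1) - β →
      P (t + 1) ≤ P t * (1 + r * K / ((m : ℝ) + (t + 1) - β)) := by
    intro t hD
    set D : ℝ := (m : ℝ) + (t + 1) - β with hD_def
    have hD0 : 0 < D := lt_of_lt_of_le zero_lt_one hD
    have hmt : (0 : ℝ) ≤ (m : ℝ) + (t + 1) := by linarith
    have h1 : ((m : ℝ) + (t + 1)) * ‖u (t + 1)‖
        ≤ β * ‖u (t + 1)‖ + ∑ j ∈ Finset.range (t + 1), ‖a j‖ * ‖u (t - j)‖ := by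
      have hnorm : ‖((m + ((t + 1 : ℕ) : ℤ) : ℤ) : ℂ) • u (t + 1)‖
          = ((m : ℝ) + (t + 1)) * ‖u (t + 1)‖ := by
        rw [norm_smul, Complex.norm_intCast]
        congr 1
        rw [abs_of_nonneg (by exact_mod_cast hmt)]
        push_cast; ring
      calc ((m : ℝ) + (t + 1)) * ‖u (t + 1)‖
          = ‖((m + ((t + 1 : ℕ) : ℤ) : ℤ) : ℂ) • u (t + 1)‖ := hnorm.symm
        _ = ‖aneg1 * u (t + 1) + ∑ j ∈ Finset.range (t + 1), a j * u (t + 1 - 1 - j)‖ := by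
            rw [hsc (t + 1)]
        _ ≤ ‖aneg1 * u (t + 1)‖ + ‖∑ j ∈ Finset.range (t + 1), a j * u (t + 1 - 1 - j)‖ :=
            norm_add_le _ _
        _ ≤ β * ‖u (t + 1)‖ + ∑ j ∈ Finset.range (t + 1), ‖a j‖ * ‖u (t - j)‖ := by
            gcongr
            · exact norm_mul_le _ _
            · refine le_trans (norm_sum_le _ _) (Finset.sum_le_sum fun j hj => ?_)
              simp only [Nat.succ_sub_one]
              exact norm_mul_le _ _
    have h2 : D * ‖u (t + 1)‖ ≤ ∑ j ∈ Finset.range (t + 1), ‖a j‖ * ‖u (t - j)‖ := by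
      rw [hD_def]; linarith
    have h3 : D * u' (t + 1) ≤ r * K * P t := by
      have e1 : D * u' (t + 1) = (D * ‖u (t + 1)‖) * r ^ (t + 1) := by
        rw [hu'_def]; ring
      rw [e1]
      calc (D * ‖u (t + 1)‖) * r ^ (t + 1)
          ≤ (∑ j ∈ Finset.range (t + 1), ‖a j‖ * ‖u (t - j)‖) * r ^ (t + 1) := by
            exact mul_le_mul_of_nonneg_right h2 (by positivity)
        _ = ∑ j ∈ Finset.range (t + 1), (‖a j‖ * r ^ j) * ((‖u (t - j)‖ * r ^ (t - j)) * r) := by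
            rw [Finset.sum_mul]
            refine Finset.sum_congr rfl fun j hj => ?_
            have hjt : j ≤ t := Nat.lt_succ_iff.mp (Finset.mem_range.mp hj)
            rw [show r ^ (t + 1) = r ^ j * (r ^ (t - j) * r) from by
              rw [← pow_succ, ← pow_add]; congr 1; omega]
            ring
        _ ≤ ∑ j ∈ Finset.range (t + 1), K * (u' (t - j) * r) := by
            refine Finset.sum_le_sum fun j hj => ?_
            exact mul_le_mul_of_nonneg_right (hK j) (by positivity)
        _ = r * K * ∑ j ∈ Finset.range (t + 1), u' (t - j) := by
            rw [Finset.mul_sum]; refine Finset.sum_congr rfl fun j _ => by ring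
        _ = r * K * P t := by
            congr 1
            have hrefl : ∑ j ∈ Finset.range (t + 1), u' (t - j)
                = ∑ j ∈ Finset.range (t + 1), u' j := by
              rw [← Finset.sum_range_reflect u' (t + 1)]
              exact Finset.sum_congr rfl fun j _ => rfl
            exact hrefl
    have h4 : u' (t + 1) ≤ r * K * P t / D := by
      rw [le_div_iff₀ hD0]; linarith [h3]
    have h5 : P (t + 1) = P t + u' (t + 1) := Finset.sum_range_succ u' (t + 1)
    rw [h5]
    have : P t * (1 + r * K / D) = P t + P t * (r * K / D) := by ring
    rw [this]
    gcongr
    calc u' (t + 1) ≤ r * K * P t / D := h4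
      _ = P t * (r * K / D) := by ring
  -- ratio test
  obtain ⟨N, hN⟩ := exists_nat_ge (β + |(m : ℝ)| + 1 + r * K * q / (l - q))
  have hlq : 0 < l - q := by linarith
  have hrq : r * q = s := by rw [hq_def]; field_simp
  have hrat : ∀ t : ℕ, N ≤ t → P (t + 1) * q ^ (t + 1) ≤ l * (P t * q ^ t) := by
    intro t ht
    have htR : (N : ℝ) ≤ t := Nat.cast_le.mpr ht
    have habs : -|(m : ℝ)| ≤ (m : ℝ) := neg_abs_le _
    have hfr0 : 0 ≤ r * K * q / (l - q) := by positivity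
    have hD1 : 1 ≤ (m : ℝ) + (t + 1) - β := by linarith
    have hDge : r * K * q / (l - q) ≤ (m : ℝ) + (t + 1) - β := by linarith
    set D : ℝ := (m : ℝ) + (t + 1) - β with hD_def
    have hD0 : (0 : ℝ) < D := lt_of_lt_of_le zero_lt_one hD1
    have hfrac : r * K / D ≤ (l - q) / q := by
      rw [div_le_div_iff₀ hD0 hq0]
      have h6 := (div_le_iff₀ hlq).mp hDge
      nlinarith
    calc P (t + 1) * q ^ (t + 1)
        ≤ (P t * (1 + r * K / D)) * q ^ (t + 1) :=
          mul_le_mul_of_nonneg_right (key t hD1) (pow_nonneg hq0.le _)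
      _ = (P t * q ^ t) * ((1 + r * K / D) * q) := by ring
      _ ≤ (P t * q ^ t) * l := by
          refine mul_le_mul_of_nonneg_left ?_ (mul_nonneg (hP0 t) (pow_nonneg hq0.le t))
          have he : (1 + (l - q) / q) * q = l := by field_simp; ring
          calc (1 + r * K / D) * q ≤ (1 + (l - q) / q) * q := by
                refine mul_le_mul_of_nonneg_right ?_ hq0.le
                linarith
            _ = l := he
      _ = l * (P t * q ^ t) := by ring
  have hsumP : Summable (fun t => P t * q ^ t) := by
    apply summable_of_ratio_norm_eventually_le hl1
    filter_upwards [Filter.eventually_ge_atTop N] with t ht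
    rw [Real.norm_of_nonneg (mul_nonneg (hP0 _) (pow_nonneg hq0.le _)),
      Real.norm_of_nonneg (mul_nonneg (hP0 _) (pow_nonneg hq0.le _))]
    exact hrat t ht
  refine Summable.of_nonneg_of_le (fun t => mul_nonneg (norm_nonneg _) (pow_nonneg hs0 _)) (fun t => ?_) hsumP
  have hst : s ^ t = r ^ t * q ^ t := by rw [← hrq, mul_pow]
  calc ‖u t‖ * s ^ t = (‖u t‖ * r ^ t) * q ^ t := by rw [hst]; ring
    _ ≤ P t * q ^ t := mul_le_mul_of_nonneg_right (hu'P t) (pow_nonneg hq0.le _)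


variable (m M : ℤ) (aneg1 : Matrix (Fin n) (Fin n) ℂ)
    (a : ℕ → Matrix (Fin n) (Fin n) ℂ) (b : ℤ → Matrix (Fin n) (Fin n) ℂ)

theorem dcoef_base {t : ℕ} (h : (t : ℤ) + m ≤ M) :
    dcoef m M aneg1 a b t = b (m + t) := by
  rw [dcoef, if_pos h]

theorem dcoef_rec (hmM : m ≤ M)
    (hEig : ∀ k : ℤ, (∃ v : Fin n → ℂ, v ≠ 0 ∧ aneg1.mulVec v = (k : ℂ) • v) → k ≤ M)
    (hrec : ∀ k : ℤ, m - 1 ≤ k → k ≤ M - 1 →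
      (((k : ℂ) + 1) • (1 : Matrix (Fin n) (Fin n) ℂ) - aneg1) * b (k + 1)
        = ∑ j ∈ Finset.range ((k - m + 1).toNat), a j * b (k - (j : ℤ)))
    (t : ℕ) :
    (((m + (t : ℤ) : ℤ) : ℂ) • (1 : Matrix (Fin n) (Fin n) ℂ) - aneg1) * dcoef m M aneg1 a b t
      = ∑ j ∈ Finset.range t, a j * dcoef m M aneg1 a b (t - 1 - j) := by
  by_cases h : (t : ℤ) + m ≤ M
  · -- base region: use hrec at k = m + t - 1
    have hk1 : m - 1 ≤ m + (t : ℤ) - 1 := by omega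
    have hk2 : m + (t : ℤ) - 1 ≤ M - 1 := by omega
    have h0 := hrec (m + (t : ℤ) - 1) hk1 hk2
    have hTN : ((m + (t : ℤ) - 1) - m + 1).toNat = t := by omega
    rw [hTN] at h0
    have e1 : ((m + (t : ℤ) - 1 : ℤ) : ℂ) + 1 = ((m + (t : ℤ) : ℤ) : ℂ) := by push_cast; ring
    have e2 : m + (t : ℤ) - 1 + 1 = m + (t : ℤ) := by ring
    rw [e1, e2] at h0
    rw [dcoef_base m M aneg1 a b h]
    rw [h0]
    apply Finset.sum_congr rfl
    intro j hj
    have hj' : j < t := Finset.mem_range.mp hj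
    have hb : ((t - 1 - j : ℕ) : ℤ) + m ≤ M := by omega
    rw [dcoef_base m M aneg1 a b hb,
      show m + (t : ℤ) - 1 - (j : ℤ) = m + ((t - 1 - j : ℕ) : ℤ) from by omega]
  · -- inverse region
    have ht1 : 1 ≤ t := by omega
    have hdet : IsUnit (((m + (t : ℤ) : ℤ) : ℂ) • (1 : Matrix (Fin n) (Fin n) ℂ) - aneg1).det := by
      rw [isUnit_iff_ne_zero]
      intro hdet0
      obtain ⟨v, hv0, hv⟩ := Matrix.exists_mulVec_eq_zero_iff.mpr hdet0
      have : aneg1.mulVec v = ((m + (t : ℤ) : ℤ) : ℂ) • v := by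
        rw [Matrix.sub_mulVec, Matrix.smul_mulVec, Matrix.one_mulVec] at hv
        have := sub_eq_zero.mp hv
        exact this.symm
      have := hEig (m + (t : ℤ)) ⟨v, hv0, this⟩
      omega
    conv_lhs => rw [dcoef, if_neg h]
    rw [← Matrix.mul_assoc, Matrix.mul_nonsing_inv _ hdet, Matrix.one_mul]
    rw [Finset.sum_attach (Finset.range t) (fun j => a j * dcoef m M aneg1 a b (t - 1 - j))]

theorem stmt_1' (n : ℕ) (hn : 1 ≤ n) (x₀ : ℂ) (ρ₀ : ℝ) (hρ₀ : 0 < ρ₀)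
    (D : Set ℂ) (hD : D = {x : ℂ | 0 < ‖x - x₀‖ ∧ ‖x - x₀‖ < ρ₀})
    (A : ℂ → Matrix (Fin n) (Fin n) ℂ)
    (aneg1 : Matrix (Fin n) (Fin n) ℂ) (a : ℕ → Matrix (Fin n) (Fin n) ℂ)
    (hA : ∀ x ∈ D, HasSum (fun k : ℕ => ((x - x₀) ^ k) • a k)
      (A x - (x - x₀)⁻¹ • aneg1))
    (m M : ℤ) (hmM : m ≤ M)
    (hEig : ∀ k : ℤ, (∃ v : Fin n → ℂ, v ≠ 0 ∧ aneg1.mulVec v = (k : ℂ) • v) → k ≤ M)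
    (b : ℤ → Matrix (Fin n) (Fin n) ℂ) (hbm : b m ≠ 0)
    (hrec : ∀ k : ℤ, m - 1 ≤ k → k ≤ M - 1 →
      (((k : ℂ) + 1) • (1 : Matrix (Fin n) (Fin n) ℂ) - aneg1) * b (k + 1)
        = ∑ j ∈ Finset.range ((k - m + 1).toNat), a j * b (k - (j : ℤ))) :
    ∃ (W : ℂ → Matrix (Fin n) (Fin n) ℂ) (c : ℤ → Matrix (Fin n) (Fin n) ℂ),
      (∀ x ∈ D, ∀ i j, HasDerivAt (fun y => W y i j) ((A x * W x) i j) x) ∧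
      (∀ x ∈ D, HasSum (fun k : ℕ => ((x - x₀) ^ (m + k : ℤ)) • c (m + k)) (W x)) ∧
      c m ≠ 0 ∧
      (∀ k : ℤ, m ≤ k → k ≤ M → c k = b k) := by
  classical
  set d : ℕ → Matrix (Fin n) (Fin n) ℂ := dcoef m M aneg1 a b with hd_def
  -- scalar form of the recurrence
  have hsc : ∀ t : ℕ, ((m + (t : ℤ) : ℤ) : ℂ) • d t
      = aneg1 * d t + ∑ j ∈ Finset.range t, a j * d (t - 1 - j) := by
    intro t
    have h := dcoef_rec m M aneg1 a b hmM hEig hrec t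
    rw [sub_mul, smul_mul_assoc, one_mul] at h
    rw [sub_eq_iff_eq_add] at h
    rw [h]; abel
  -- bounds on the coefficients a
  have hKbound : ∀ r : ℝ, 0 < r → r < ρ₀ → ∃ K : ℝ, ∀ j : ℕ, ‖a j‖ * r ^ j ≤ K := by
    intro r hr hrρ
    have hx : (x₀ + r) ∈ D := by
      rw [hD]; constructor <;> simp [Complex.norm_real, abs_of_pos hr] <;> [exact hr; exact hrρ]
    have hsummable := (hA _ hx).summable
    have hnorm : Summable (fun k => ‖((x₀ + (r : ℂ) - x₀) ^ k) • a k‖) :=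
      summable_norm_iff.mpr hsummable
    refine ⟨∑' k, ‖((x₀ + (r : ℂ) - x₀) ^ k) • a k‖, fun j => ?_⟩
    have hle := Summable.le_tsum hnorm j (fun i _ => norm_nonneg _)
    have he : ‖((x₀ + (r : ℂ) - x₀) ^ j) • a j‖ = ‖a j‖ * r ^ j := by
      rw [norm_smul, norm_pow]
      simp [Complex.norm_real, abs_of_pos hr, mul_comm]
    rw [← he]; exact hle
  -- summability of the d-series
  have hdsum : ∀ s : ℝ, 0 ≤ s → s < ρ₀ → Summable (fun t => ‖d t‖ * s ^ t) := by
    intro s hs0 hsρ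
    have hr0 : 0 < (s + ρ₀) / 2 := by linarith
    have hsr : s < (s + ρ₀) / 2 := by linarith
    have hrρ : (s + ρ₀) / 2 < ρ₀ := by linarith
    obtain ⟨K, hK⟩ := hKbound _ hr0 hrρ
    exact normSummable m hsc hr0 hK hs0 hsr
  -- the functions g and g1
  set g : ℂ → Matrix (Fin n) (Fin n) ℂ := fun z => ∑' t : ℕ, z ^ t • d t with hg_def
  set g1 : ℂ → Matrix (Fin n) (Fin n) ℂ :=
    fun z => ∑' t : ℕ, ((t : ℂ) * z ^ (t - 1)) • d t with hg1_def
  have hsmul_norm : ∀ (z : ℂ) (t : ℕ), ‖z ^ t • d t‖ = ‖d t‖ * ‖z‖ ^ t := by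
    intro z t; rw [norm_smul, norm_pow, mul_comm]
  have hgsummable : ∀ z : ℂ, ‖z‖ < ρ₀ → Summable (fun t : ℕ => ‖z ^ t • d t‖) := by
    intro z hz
    have := hdsum ‖z‖ (norm_nonneg z) hz
    simpa only [hsmul_norm] using this
  have hg_sum : ∀ z : ℂ, ‖z‖ < ρ₀ → HasSum (fun t : ℕ => z ^ t • d t) (g z) := by
    intro z hz
    exact ((hgsummable z hz).of_norm).hasSum
  -- uniform bound for derivative series
  have hg1bound : ∀ r : ℝ, 0 < r → r < ρ₀ →
      ∃ u : ℕ → ℝ, Summable u ∧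
        ∀ (t : ℕ) (y : ℂ), y ∈ Metric.ball (0 : ℂ) r →
          ‖((t : ℂ) * y ^ (t - 1)) • d t‖ ≤ u t := by
    intro r hr hrρ
    set r' : ℝ := (r + ρ₀) / 2 with hr'_def
    have hr'0 : 0 < r' := by rw [hr'_def]; linarith
    have hrr' : r < r' := by rw [hr'_def]; linarith
    have hr'ρ : r' < ρ₀ := by rw [hr'_def]; linarith
    have hsum' := hdsum r' hr'0.le hr'ρ
    set C : ℝ := ∑' t, ‖d t‖ * r' ^ t with hC_def
    have hC : ∀ t, ‖d t‖ * r' ^ t ≤ C :=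
      fun t => Summable.le_tsum hsum' t (fun i _ => mul_nonneg (norm_nonneg _) (pow_nonneg hr'0.le _))
    have hC0 : 0 ≤ C := le_trans (mul_nonneg (norm_nonneg _) (pow_nonneg hr'0.le 0)) (hC 0)
    set q : ℝ := r / r' with hq_def
    have hq0 : 0 < q := div_pos hr hr'0
    have hq1 : q < 1 := (div_lt_one hr'0).mpr hrr'
    refine ⟨fun t => (C / r) * ((t : ℝ) * q ^ t), ?_, ?_⟩
    · have := summable_pow_mul_geometric_of_norm_lt_one (R := ℝ) 1 (by
        rw [Real.norm_of_nonneg hq0.le]; exact hq1)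
      have h2 : Summable (fun t : ℕ => (t : ℝ) * q ^ t) := by
        simpa only [pow_one] using this
      exact h2.mul_left _
    · intro t y hy
      have hyr : ‖y‖ ≤ r := by
        have := Metric.mem_ball.mp hy
        rw [dist_zero_right] at this
        exact this.le
      rcases Nat.eq_zero_or_pos t with ht | ht
      · subst ht; simp
      · have h1 : ‖((t : ℂ) * y ^ (t - 1)) • d t‖ = (t : ℝ) * ‖y‖ ^ (t - 1) * ‖d t‖ := by
          rw [norm_smul, norm_mul, norm_pow, Complex.norm_natCast]
        rw [h1]
        have h2 : (t : ℝ) * ‖y‖ ^ (t - 1) * ‖d t‖ ≤ (t : ℝ) * r ^ (t - 1) * ‖d t‖ := by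
          have h3 : ‖y‖ ^ (t - 1) ≤ r ^ (t - 1) := pow_le_pow_left₀ (norm_nonneg y) hyr (t - 1)
          exact mul_le_mul_of_nonneg_right
            (mul_le_mul_of_nonneg_left h3 (Nat.cast_nonneg t)) (norm_nonneg _)
        refine h2.trans ?_
        have hrpow : r ^ (t - 1) = r ^ t / r := by
          rw [eq_div_iff hr.ne', ← pow_succ]
          congr 1; omega
        have hrt : r ^ t = q ^ t * r' ^ t := by
          rw [hq_def, div_pow]; field_simp
        have hdt : ‖d t‖ ≤ C / r' ^ t := by
          rw [le_div_iff₀ (pow_pos hr'0 t)]; exact hC t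
        calc (t : ℝ) * r ^ (t - 1) * ‖d t‖
            ≤ (t : ℝ) * r ^ (t - 1) * (C / r' ^ t) := by
              have h4 : (0:ℝ) ≤ (t : ℝ) * r ^ (t-1) :=
                mul_nonneg (Nat.cast_nonneg t) (pow_nonneg hr.le _)
              exact mul_le_mul_of_nonneg_left hdt h4
          _ = C / r * ((t : ℝ) * q ^ t) := by
              rw [hrpow, hrt]
              have : r' ^ t ≠ 0 := (pow_pos hr'0 t).ne'
              field_simp
  -- summability of the derivative series pointwise + HasSum of g1
  have hg1_sum : ∀ z : ℂ, ‖z‖ < ρ₀ →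
      HasSum (fun t : ℕ => ((t : ℂ) * z ^ (t - 1)) • d t) (g1 z) := by
    intro z hz
    have hr0 : 0 < (‖z‖ + ρ₀) / 2 := by have := norm_nonneg z; linarith
    have hzr : ‖z‖ < (‖z‖ + ρ₀) / 2 := by linarith
    have hrρ : (‖z‖ + ρ₀) / 2 < ρ₀ := by linarith
    obtain ⟨u, hu, hub⟩ := hg1bound _ hr0 hrρ
    have hzball : z ∈ Metric.ball (0 : ℂ) ((‖z‖ + ρ₀) / 2) := by
      rw [Metric.mem_ball, dist_zero_right]; exact hzr
    have : Summable (fun t : ℕ => ((t : ℂ) * z ^ (t - 1)) • d t) :=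
      Summable.of_norm (hu.of_nonneg_of_le (fun _ => norm_nonneg _) (fun t => hub t z hzball))
    exact this.hasSum
  -- derivative of g
  have hgderiv : ∀ z : ℂ, ‖z‖ < ρ₀ → HasDerivAt g (g1 z) z := by
    intro z hz
    have hr0 : 0 < (‖z‖ + ρ₀) / 2 := by have := norm_nonneg z; linarith
    have hzr : ‖z‖ < (‖z‖ + ρ₀) / 2 := by linarith
    have hrρ : (‖z‖ + ρ₀) / 2 < ρ₀ := by linarith
    obtain ⟨u, hu, hub⟩ := hg1bound _ hr0 hrρ
    have hzball : z ∈ Metric.ball (0 : ℂ) ((‖z‖ + ρ₀) / 2) := by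
      rw [Metric.mem_ball, dist_zero_right]; exact hzr
    have htu : TendstoUniformlyOn
        (fun N => fun y => ∑ t ∈ Finset.range N, ((t : ℂ) * y ^ (t - 1)) • d t)
        (fun y => ∑' t : ℕ, ((t : ℂ) * y ^ (t - 1)) • d t) Filter.atTop
        (Metric.ball (0 : ℂ) ((‖z‖ + ρ₀) / 2)) :=
      tendstoUniformlyOn_tsum_nat hu (fun t y hy => hub t y hy)
    have htu' : TendstoUniformlyOn
        (fun N => fun y => ∑ t ∈ Finset.range N, ((t : ℂ) * y ^ (t - 1)) • d t)
        g1 Filter.atTop (Metric.ball (0 : ℂ) ((‖z‖ + ρ₀) / 2)) := htu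
    refine hasDerivAt_of_tendstoUniformlyOn
      (f := fun N => fun y => ∑ t ∈ Finset.range N, y ^ t • d t)
      Metric.isOpen_ball htu' ?_ ?_ hzball
    · filter_upwards with N y hy
      refine HasDerivAt.fun_sum fun t _ => ?_
      exact (hasDerivAt_pow t y).smul_const (d t)
    · intro y hy
      have hyρ : ‖y‖ < ρ₀ := by
        have := Metric.mem_ball.mp hy
        rw [dist_zero_right] at this
        linarith
      exact (hg_sum y hyρ).tendsto_sum_nat
  -- main algebraic identity
  have hmain : ∀ z : ℂ, z ≠ 0 → ‖z‖ < ρ₀ →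
      ∀ Bz : Matrix (Fin n) (Fin n) ℂ, HasSum (fun k : ℕ => z ^ k • a k) Bz →
      (m : ℂ) • g z + z • g1 z = aneg1 * g z + z • (Bz * g z) := by
    intro z hz0 hzρ Bz hBz
    -- LHS HasSum
    have h1 : HasSum (fun t : ℕ => (m : ℂ) • (z ^ t • d t)) ((m : ℂ) • g z) :=
      (hg_sum z hzρ).const_smul _
    have h2 : HasSum (fun t : ℕ => ((t : ℂ) * z ^ t) • d t) (z • g1 z) := by
      have := (hg1_sum z hzρ).const_smul z
      have he : (fun t : ℕ => z • (((t : ℂ) * z ^ (t - 1)) • d t))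
          = fun t : ℕ => ((t : ℂ) * z ^ t) • d t := by
        funext t
        rcases Nat.eq_zero_or_pos t with ht | ht
        · subst ht; simp
        · rw [smul_smul]
          congr 1
          have hzz : z * z ^ (t - 1) = z ^ t := by
            rw [← pow_succ']; congr 1; omega
          calc z * ((t : ℂ) * z ^ (t - 1)) = (t : ℂ) * (z * z ^ (t - 1)) := by ring
            _ = (t : ℂ) * z ^ t := by rw [hzz]
      rw [he] at this
      exact this
    have h3 : HasSum (fun t : ℕ => aneg1 * (z ^ t • d t)) (aneg1 * g z) :=
      (hg_sum z hzρ).mul_left aneg1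
    have hLd := (h1.add h2).sub h3
    -- rewrite the term of hLd via the recurrence
    have hterm : (fun t : ℕ => (m : ℂ) • (z ^ t • d t) + ((t : ℂ) * z ^ t) • d t
        - aneg1 * (z ^ t • d t))
        = fun t : ℕ => z ^ t • (∑ j ∈ Finset.range t, a j * d (t - 1 - j)) := by
      funext t
      have hs := hsc t
      have e1 : (m : ℂ) • (z ^ t • d t) + ((t : ℂ) * z ^ t) • d t
          = z ^ t • (((m + (t : ℤ) : ℤ) : ℂ) • d t) := by
        rw [smul_smul, smul_smul (z ^ t), ← add_smul]
        congr 1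
        push_cast; ring
      rw [e1, mul_smul_comm, ← smul_sub, hs]
      congr 1
      abel
    rw [hterm] at hLd
    -- shift index
    have hF0 : (fun t : ℕ => z ^ t • (∑ j ∈ Finset.range t, a j * d (t - 1 - j))) 0 = 0 := by
      simp
    have hshift : HasSum (fun t : ℕ =>
        z ^ (t + 1) • (∑ j ∈ Finset.range (t + 1), a j * d (t - j)))
        ((m : ℂ) • g z + z • g1 z - aneg1 * g z) := by
      have := (hasSum_nat_add_iff
        (f := fun t : ℕ => z ^ t • (∑ j ∈ Finset.range t, a j * d (t - 1 - j))) 1).mpr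
        (by simpa using hLd)
      simpa using this
    -- Cauchy product
    have hsa_norm : Summable (fun k : ℕ => ‖z ^ k • a k‖) := by
      have hr0 : 0 < (‖z‖ + ρ₀) / 2 := by have := norm_nonneg z; linarith
      have hzr : ‖z‖ < (‖z‖ + ρ₀) / 2 := by linarith
      have hrρ : (‖z‖ + ρ₀) / 2 < ρ₀ := by linarith
      obtain ⟨K, hK⟩ := hKbound _ hr0 hrρ
      have hK0 : 0 ≤ K := le_trans (by positivity) (hK 0)
      set q : ℝ := ‖z‖ / ((‖z‖ + ρ₀) / 2) with hq_def
      have hq0 : 0 ≤ q := div_nonneg (norm_nonneg z) hr0.le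
      have hq1 : q < 1 := (div_lt_one hr0).mpr hzr
      refine Summable.of_nonneg_of_le (fun k => norm_nonneg _)
        (fun k => ?_) ((summable_geometric_of_lt_one hq0 hq1).mul_left K)
      rw [norm_smul, norm_pow]
      have : ‖z‖ ^ k = q ^ k * ((‖z‖ + ρ₀) / 2) ^ k := by
        rw [hq_def, div_pow]; field_simp
      rw [this]
      calc q ^ k * ((‖z‖ + ρ₀) / 2) ^ k * ‖a k‖
          = (‖a k‖ * ((‖z‖ + ρ₀) / 2) ^ k) * q ^ k := by ring
        _ ≤ K * q ^ k :=
            mul_le_mul_of_nonneg_right (hK k) (pow_nonneg hq0 k)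
    have hsd_norm : Summable (fun t : ℕ => ‖z ^ t • d t‖) := hgsummable z hzρ
    have hcauchy : HasSum (fun t : ℕ =>
        ∑ k ∈ Finset.range (t + 1), (z ^ k • a k) * (z ^ (t - k) • d (t - k)))
        (Bz * g z) := by
      have h := hasSum_sum_range_mul_of_summable_norm hsa_norm hsd_norm
      rw [← hBz.tsum_eq, ← (hg_sum z hzρ).tsum_eq]; exact h
    have hcauchy' : HasSum (fun t : ℕ =>
        z ^ (t + 1) • (∑ j ∈ Finset.range (t + 1), a j * d (t - j)))
        (z • (Bz * g z)) := by
      have := hcauchy.const_smul z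
      have he : (fun t : ℕ => z • ∑ k ∈ Finset.range (t + 1),
          (z ^ k • a k) * (z ^ (t - k) • d (t - k)))
          = fun t : ℕ => z ^ (t + 1) • (∑ j ∈ Finset.range (t + 1), a j * d (t - j)) := by
        funext t
        rw [Finset.smul_sum, Finset.smul_sum]
        refine Finset.sum_congr rfl fun k hk => ?_
        have hkt : k ≤ t := Nat.lt_succ_iff.mp (Finset.mem_range.mp hk)
        rw [smul_mul_assoc, mul_smul_comm, smul_smul, smul_smul]
        congr 1
        rw [mul_assoc, ← pow_add, show k + (t - k) = t from by omega, ← pow_succ']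
      rw [he] at this
      exact this
    have huniq := hshift.unique hcauchy'
    rw [← huniq]; abel
  -- definition of W and c
  set W : ℂ → Matrix (Fin n) (Fin n) ℂ := fun x => (x - x₀) ^ (m : ℤ) • g (x - x₀) with hW_def
  set c : ℤ → Matrix (Fin n) (Fin n) ℂ :=
    fun k => if m ≤ k then d (k - m).toNat else 0 with hc_def
  have hcd : ∀ k : ℕ, c (m + k) = d k := by
    intro k
    rw [hc_def]
    have h1 : m ≤ m + (k : ℤ) := by omega
    have h2 : (m + (k : ℤ) - m).toNat = k := by omega
    simp only [h1, if_true, h2]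
  refine ⟨W, c, ?_, ?_, ?_, ?_⟩
  · -- the ODE
    intro x hx i j
    rw [hD] at hx
    obtain ⟨hx1, hx2⟩ := hx
    set z : ℂ := x - x₀ with hz_def
    have hz0 : z ≠ 0 := norm_pos_iff.mp hx1
    set Bz : Matrix (Fin n) (Fin n) ℂ := A x - z⁻¹ • aneg1 with hBz_def
    have hBz : HasSum (fun k : ℕ => z ^ k • a k) Bz := by
      have := hA x (by rw [hD]; exact ⟨hx1, hx2⟩)
      exact this
    have hin : HasDerivAt (fun y : ℂ => y - x₀) 1 x := (hasDerivAt_id x).sub_const x₀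
    have hzpow : HasDerivAt (fun y : ℂ => (y - x₀) ^ (m : ℤ)) ((m : ℂ) * z ^ (m - 1)) x := by
      have := (hasDerivAt_zpow m z (Or.inl hz0)).comp x hin
      rw [mul_one] at this; exact this
    have hgz : HasDerivAt (fun y : ℂ => g (y - x₀)) (g1 z) x := by
      have := (hgderiv z hx2).scomp x hin
      rw [one_smul] at this; exact this
    have hWd : HasDerivAt W (z ^ (m : ℤ) • g1 z + ((m : ℂ) * z ^ (m - 1)) • g z) x :=
      hzpow.smul hgz
    have hid := hmain z hz0 hx2 Bz hBz
    have hgoal : z ^ (m : ℤ) • g1 z + ((m : ℂ) * z ^ (m - 1)) • g z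
        = z ^ (m - 1) • (aneg1 * g z) + z ^ (m : ℤ) • (Bz * g z) := by
      have e1 : z ^ (m : ℤ) • g1 z = z ^ (m - 1) • (z • g1 z) := by
        rw [smul_smul]
        congr 1
        rw [← zpow_add_one₀ hz0]
        congr 1; ring
      have e2 : ((m : ℂ) * z ^ (m - 1)) • g z = z ^ (m - 1) • ((m : ℂ) • g z) := by
        rw [smul_smul, mul_comm]
      rw [e1, e2, ← smul_add]
      have e3 : z • g1 z + (m : ℂ) • g z = aneg1 * g z + z • (Bz * g z) := by
        rw [add_comm]; exact hid
      rw [e3, smul_add, smul_smul (z ^ (m - 1)) z]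
      congr 2
      rw [← zpow_add_one₀ hz0]
      congr 1; ring
    have hAW : A x * W x = z ^ (m - 1) • (aneg1 * g z) + z ^ (m : ℤ) • (Bz * g z) := by
      have hAx : A x = z⁻¹ • aneg1 + Bz := by rw [hBz_def]; abel
      have hWx : W x = z ^ (m : ℤ) • g z := rfl
      calc A x * W x = (z⁻¹ • aneg1 + Bz) * (z ^ (m : ℤ) • g z) := by rw [← hAx, hWx]
        _ = z ^ (m : ℤ) • ((z⁻¹ • aneg1) * g z) + z ^ (m : ℤ) • (Bz * g z) := by
            rw [add_mul, mul_smul_comm, mul_smul_comm]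
        _ = z ^ (m - 1) • (aneg1 * g z) + z ^ (m : ℤ) • (Bz * g z) := by
            congr 1
            rw [smul_mul_assoc, smul_smul]
            congr 1
            exact (zpow_sub_one₀ hz0 m).symm
    have hW' : HasDerivAt W (A x * W x) x := by
      rw [hAW, ← hgoal]; exact hWd
    exact ((Matrix.entryLinearMap ℂ ℂ i j).toContinuousLinearMap).hasFDerivAt.comp_hasDerivAt
      x hW'
  · -- the Laurent expansion
    intro x hx
    rw [hD] at hx
    obtain ⟨hx1, hx2⟩ := hx
    set z : ℂ := x - x₀ with hz_def
    have hz0 : z ≠ 0 := norm_pos_iff.mp hx1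
    have := (hg_sum z hx2).const_smul (z ^ (m : ℤ))
    have he : (fun k : ℕ => z ^ (m : ℤ) • (z ^ k • d k))
        = fun k : ℕ => (z ^ (m + (k : ℕ) : ℤ)) • c (m + (k : ℕ)) := by
      funext k
      rw [hcd k, smul_smul]
      congr 1
      rw [zpow_add₀ hz0, zpow_natCast]
    rw [he] at this
    exact this
  · -- c m = b m ≠ 0
    have h1 : m ≤ m := le_refl m
    have h2 : (m - m).toNat = 0 := by omega
    have : c m = d 0 := by rw [hc_def]; simp only [h1, if_true, h2]
    rw [this, hd_def, dcoef_base m M aneg1 a b (t := 0) (by omega)]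
    simpa using hbm
  · -- coefficients m ≤ k ≤ M agree with b
    intro k hk1 hk2
    have h2 : ((k - m).toNat : ℤ) + m ≤ M := by omega
    have : c k = d (k - m).toNat := by rw [hc_def]; simp only [hk1, if_true]
    rw [this, hd_def, dcoef_base m M aneg1 a b h2,
      show m + (((k - m).toNat : ℕ) : ℤ) = k from by omega]

end Aux



/- STATEMENT 1: Let m ≤ M be integers with every integer eigenvalue of a₋₁ at most M.
   If matrices b_m, …, b_M with b_m ≠ 0 satisfy the recurrence
   ((k+1)Iₙ − a₋₁) b_{k+1} = Σ_{j=0}^{k−m} a_j b_{k−j}  (m−1 ≤ k ≤ M−1),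
   then the system dW/dx = A(x)W has a solution of form (2.2) with leading order m
   whose Laurent coefficients of index m, …, M are b_m, …, b_M. -/
theorem stmt_1 (n : ℕ) (hn : 1 ≤ n) (x₀ : ℂ) (ρ₀ : ℝ) (hρ₀ : 0 < ρ₀)
    (D : Set ℂ) (hD : D = {x : ℂ | 0 < ‖x - x₀‖ ∧ ‖x - x₀‖ < ρ₀})
    (A : ℂ → Matrix (Fin n) (Fin n) ℂ)
    (aneg1 : Matrix (Fin n) (Fin n) ℂ) (a : ℕ → Matrix (Fin n) (Fin n) ℂ)
    -- A(x) = (x−x₀)⁻¹ • a₋₁ + Σ_{k≥0} a_k (x−x₀)^k, converging on D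
    (hA : ∀ x ∈ D, HasSum (fun k : ℕ => ((x - x₀) ^ k) • a k)
      (A x - (x - x₀)⁻¹ • aneg1))
    (m M : ℤ) (hmM : m ≤ M)
    -- every integer eigenvalue of a₋₁ is ≤ M
    (hEig : ∀ k : ℤ, (∃ v : Fin n → ℂ, v ≠ 0 ∧ aneg1.mulVec v = (k : ℂ) • v) → k ≤ M)
    (b : ℤ → Matrix (Fin n) (Fin n) ℂ) (hbm : b m ≠ 0)
    -- the recurrence (2.6) for m−1 ≤ k ≤ M−1 (empty right-hand sum when k = m−1)
    (hrec : ∀ k : ℤ, m - 1 ≤ k → k ≤ M - 1 →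
      (((k : ℂ) + 1) • (1 : Matrix (Fin n) (Fin n) ℂ) - aneg1) * b (k + 1)
        = ∑ j ∈ Finset.range ((k - m + 1).toNat), a j * b (k - (j : ℤ))) :
    ∃ (W : ℂ → Matrix (Fin n) (Fin n) ℂ) (c : ℤ → Matrix (Fin n) (Fin n) ℂ),
      -- W solves dW/dx = A(x) W on D
      (∀ x ∈ D, ∀ i j, HasDerivAt (fun y => W y i j) ((A x * W x) i j) x) ∧
      -- W has form (2.2) with leading order m and coefficients c_k, k ≥ m
      (∀ x ∈ D, HasSum (fun k : ℕ => ((x - x₀) ^ (m + k : ℤ)) • c (m + k)) (W x)) ∧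
      c m ≠ 0 ∧
      -- the coefficients of index m, …, M are the given ones
      (∀ k : ℤ, m ≤ k → k ≤ M → c k = b k) := by
  exact stmt_1' n hn x₀ ρ₀ hρ₀ D hD A aneg1 a hA m M hmM hEig b hbm hrec
end

section
/- Suppose Y : D → ℂ^{n×n} solves the adjoint system dY/dx = −Y A(x) on D and Y(x) = Σ_{k≥p} c_k (x − x₀)^k on D with constant matrix coefficients c_k and c_p ≠ 0 (i.e. Y has form (2.2) with leading order p). Then −p is an eigenvalue of a₋₁. -/
open Filter Topology FormalMultilinearSeries

lemma key_lemma (x₀ : ℂ) (ρ : ℝ) (hρ : 0 < ρ) (b : ℕ → ℂ) (f : ℂ → ℂ)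
    (hf : ∀ x : ℂ, 0 < ‖x - x₀‖ → ‖x - x₀‖ < ρ → HasSum (fun k : ℕ => (x - x₀) ^ k * b k) (f x)) :
    ∃ G : ℂ → ℂ, ContinuousAt G x₀ ∧ ContinuousAt (deriv G) x₀ ∧ G x₀ = b 0 ∧
      ∀ x : ℂ, 0 < ‖x - x₀‖ → ‖x - x₀‖ < ρ / 2 → G x = f x := by
  set q : FormalMultilinearSeries ℂ ℂ ℂ := ofScalars ℂ b with hq
  set x₁ : ℂ := x₀ + (3 * ρ / 4 : ℝ) with hx₁
  have hx₁n : ‖x₁ - x₀‖ = 3 * ρ / 4 := by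
    rw [hx₁, add_sub_cancel_left, Complex.norm_real, Real.norm_of_nonneg (by linarith)]
  have hsum1 := hf x₁ (by rw [hx₁n]; linarith) (by rw [hx₁n]; linarith)
  have hb : ∃ C : ℝ, ∀ k : ℕ, ‖b k‖ * (3 * ρ / 4) ^ k ≤ C := by
    have h0 := hsum1.summable.tendsto_atTop_zero
    have hnorm : Tendsto (fun k : ℕ => ‖(x₁ - x₀) ^ k * b k‖) atTop (𝓝 0) := by
      simpa using h0.norm
    obtain ⟨C, hC⟩ := hnorm.bddAbove_range
    refine ⟨C, fun k => ?_⟩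
    have := hC (Set.mem_range_self k)
    simpa [norm_mul, norm_pow, hx₁n, mul_comm] using this
  obtain ⟨C, hC⟩ := hb
  have hqnorm : ∀ k : ℕ, ‖q k‖ ≤ ‖b k‖ := by
    intro k
    rw [hq, ofScalars_norm]
  have hrad : ((3 * ρ / 4 : ℝ).toNNReal : ENNReal) ≤ q.radius := by
    apply q.le_radius_of_bound C
    intro k
    calc ‖q k‖ * ((3 * ρ / 4 : ℝ).toNNReal : ℝ) ^ k
        ≤ ‖b k‖ * (3 * ρ / 4) ^ k := by
          rw [Real.coe_toNNReal _ (by linarith)]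
          gcongr
          exact hqnorm k
      _ ≤ C := hC k
  set r : NNReal := (ρ / 2 : ℝ).toNNReal with hr
  have hrρ : (r : ENNReal) ≤ q.radius := by
    refine le_trans ?_ hrad
    rw [ENNReal.coe_le_coe]
    exact Real.toNNReal_mono (by linarith)
  set G : ℂ → ℂ := fun x => q.sum (x - x₀) with hG
  have hrpos : (0 : ENNReal) < r := by
    simp only [ENNReal.coe_pos, hr]
    exact Real.toNNReal_pos.mpr (by linarith)
  have hball : HasFPowerSeriesOnBall G q x₀ (r : ENNReal) := by
    refine ⟨hrρ, hrpos, ?_⟩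
    intro y hy
    have : y ∈ EMetric.ball (0 : ℂ) q.radius := EMetric.ball_subset_ball hrρ hy
    simpa [hG] using q.hasSum this
  have hval : ∀ x : ℂ, 0 < ‖x - x₀‖ → ‖x - x₀‖ < ρ / 2 → G x = f x := by
    intro x hx1 hx2
    have hmem : x - x₀ ∈ EMetric.ball (0 : ℂ) q.radius := by
      refine EMetric.ball_subset_ball hrρ ?_
      rw [EMetric.mem_ball, edist_zero_right]
      have h1 : ‖x - x₀‖₊ < r := by
        rw [hr, ← norm_toNNReal]
        exact (Real.toNNReal_lt_toNNReal_iff (by linarith)).mpr hx2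
      exact_mod_cast h1
    have h1 : HasSum (fun k : ℕ => q k fun _ => (x - x₀)) (G x) := q.hasSum hmem
    have heq : (fun k : ℕ => q k fun _ => (x - x₀)) = fun k : ℕ => (x - x₀) ^ k * b k := by
      funext k
      rw [hq, ofScalars_apply_eq, smul_eq_mul, mul_comm]
    rw [heq] at h1
    exact h1.unique (hf x hx1 (by linarith))
  refine ⟨G, hball.analyticAt.continuousAt, ?_, ?_, hval⟩
  · exact ((hball.analyticOnNhd.deriv) x₀ (EMetric.mem_ball_self hrpos)).continuousAt
  · have h0 := hball.coeff_zero (fun _ => 0)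
    rw [← h0, hq, ofScalars]
    simp

/- STATEMENT 2: If Y solves the adjoint system dY/dx = −Y A(x) on D and
   Y(x) = Σ_{k≥p} c_k (x−x₀)^k with c_p ≠ 0, then −p is an eigenvalue of a₋₁. -/
theorem stmt_2 (n : ℕ) (hn : 1 ≤ n) (x₀ : ℂ) (ρ₀ : ℝ) (hρ₀ : 0 < ρ₀)
    (D : Set ℂ) (hD : D = {x : ℂ | 0 < ‖x - x₀‖ ∧ ‖x - x₀‖ < ρ₀})
    (A Y : ℂ → Matrix (Fin n) (Fin n) ℂ)
    (aneg1 : Matrix (Fin n) (Fin n) ℂ) (a : ℕ → Matrix (Fin n) (Fin n) ℂ)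
    -- A(x) = (x−x₀)⁻¹ • a₋₁ + Σ_{k≥0} a_k (x−x₀)^k, converging on D
    (hA : ∀ x ∈ D, HasSum (fun k : ℕ => ((x - x₀) ^ k) • a k)
      (A x - (x - x₀)⁻¹ • aneg1))
    -- Y is a solution of dY/dx = −Y A(x) on D
    (hY : ∀ x ∈ D, ∀ i j, HasDerivAt (fun y => Y y i j) ((-(Y x * A x)) i j) x)
    -- Y has form (2.2) with leading order p
    (p : ℤ) (c : ℕ → Matrix (Fin n) (Fin n) ℂ) (hc0 : c 0 ≠ 0)
    (hYsum : ∀ x ∈ D, HasSum (fun k : ℕ => ((x - x₀) ^ (p + k : ℤ)) • c k) (Y x)) :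
    ∃ v : Fin n → ℂ, v ≠ 0 ∧ aneg1.mulVec v = (-(p : ℂ)) • v := by
  have hD' : ∀ x : ℂ, 0 < ‖x - x₀‖ → ‖x - x₀‖ < ρ₀ → x ∈ D := by
    intro x h1 h2; rw [hD]; exact ⟨h1, h2⟩
  -- entrywise sums for (x-x₀)^(-p) * Y
  have hfG : ∀ i l : Fin n, ∀ x : ℂ, 0 < ‖x - x₀‖ → ‖x - x₀‖ < ρ₀ →
      HasSum (fun k : ℕ => (x - x₀) ^ k * c k i l) ((x - x₀) ^ (-p : ℤ) * Y x i l) := by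
    intro i l x h1 h2
    have hx : x - x₀ ≠ 0 := by
      intro h; rw [h] at h1; simp at h1
    have h := hYsum x (hD' x h1 h2)
    have h' : HasSum (fun k : ℕ => ((x - x₀) ^ (p + k : ℤ)) * c k i l) (Y x i l) := by
      have := (Pi.hasSum.1 ((Pi.hasSum).1 h i)) l
      simpa [Matrix.smul_apply] using this
    have h'' := h'.mul_left ((x - x₀) ^ (-p : ℤ))
    have heq : (fun k : ℕ => (x - x₀) ^ (-p : ℤ) * ((x - x₀) ^ (p + k : ℤ) * c k i l))
        = fun k : ℕ => (x - x₀) ^ k * c k i l := by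
      funext k
      rw [← mul_assoc, ← zpow_add₀ hx]
      norm_num
    rwa [heq] at h''
  -- entrywise sums for the regular part of A
  have hfS : ∀ l j : Fin n, ∀ x : ℂ, 0 < ‖x - x₀‖ → ‖x - x₀‖ < ρ₀ →
      HasSum (fun k : ℕ => (x - x₀) ^ k * a k l j) (A x l j - (x - x₀)⁻¹ * aneg1 l j) := by
    intro l j x h1 h2
    have h := hA x (hD' x h1 h2)
    have := (Pi.hasSum.1 ((Pi.hasSum).1 h l)) j
    simpa [Matrix.smul_apply, Matrix.sub_apply] using this
  choose G hGc hGd hG0 hGeq using fun i l : Fin n =>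
    key_lemma x₀ ρ₀ hρ₀ (fun k => c k i l) _ (hfG i l)
  choose S hSc _hSd _hS0 hSeq using fun l j : Fin n =>
    key_lemma x₀ ρ₀ hρ₀ (fun k => a k l j) _ (hfS l j)
  -- the punctured ball
  set U : Set ℂ := {y : ℂ | 0 < ‖y - x₀‖ ∧ ‖y - x₀‖ < ρ₀ / 2} with hU
  have hUopen : IsOpen U := by
    have : U = Metric.ball x₀ (ρ₀ / 2) ∩ {x₀}ᶜ := by
      ext y
      simp only [hU, Set.mem_setOf_eq, Set.mem_inter_iff, Metric.mem_ball, dist_eq_norm,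
        Set.mem_compl_iff, Set.mem_singleton_iff]
      constructor
      · rintro ⟨h1, h2⟩
        exact ⟨h2, fun h => by simp [h] at h1⟩
      · rintro ⟨h1, h2⟩
        refine ⟨?_, h1⟩
        rw [norm_pos_iff, sub_ne_zero]
        exact h2
    rw [this]
    exact Metric.isOpen_ball.inter isOpen_compl_singleton
  have hUmem : U ∈ 𝓝[≠] x₀ := by
    apply mem_nhdsWithin.2
    refine ⟨Metric.ball x₀ (ρ₀ / 2), Metric.isOpen_ball, Metric.mem_ball_self (by linarith), ?_⟩
    rintro y ⟨hy1, hy2⟩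
    have : y ≠ x₀ := hy2
    refine ⟨?_, by rwa [Metric.mem_ball, dist_eq_norm] at hy1⟩
    rw [norm_pos_iff, sub_ne_zero]
    exact this
  have main : ∀ i j : Fin n, (p : ℂ) * c 0 i j + ∑ l, c 0 i l * aneg1 l j = 0 := by
    intro i j
    set Φ : ℂ → ℂ := fun x => (x - x₀) * deriv (G i j) x + (p : ℂ) * G i j x
      + ∑ l, G i l x * (aneg1 l j + (x - x₀) * S l j x) with hΦ
    have hev : ∀ᶠ x in 𝓝[≠] x₀, Φ x = 0 := by
      filter_upwards [hUmem] with x hx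
      obtain ⟨hx1, hx2⟩ := hx
      have hx0 : x - x₀ ≠ 0 := by
        intro h; rw [h] at hx1; simp at hx1
      have hxD : x ∈ D := hD' x hx1 (by linarith)
      have hder : deriv (G i j) x
          = (-p : ℂ) * ((x - x₀) ^ (-p : ℤ) * (x - x₀)⁻¹) * Y x i j
            + (x - x₀) ^ (-p : ℤ) * (-(Y x * A x)) i j := by
        have h1 : HasDerivAt (fun y : ℂ => (y - x₀) ^ (-p : ℤ))
            ((-p : ℂ) * ((x - x₀) ^ (-p : ℤ) * (x - x₀)⁻¹)) x := by
          have := (hasDerivAt_zpow (-p) (x - x₀) (Or.inl hx0)).comp x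
            ((hasDerivAt_id x).sub_const x₀)
          simpa [zpow_sub_one₀ hx0, Function.comp_def] using this
        have h2 := h1.mul (hY x hxD i j)
        have heq : G i j =ᶠ[𝓝 x] fun y => (y - x₀) ^ (-p : ℤ) * Y y i j := by
          filter_upwards [hUopen.mem_nhds ⟨hx1, hx2⟩] with y hy
          exact hGeq i j y hy.1 hy.2
        rw [heq.deriv_eq]; exact h2.deriv
      have hGv : ∀ i' l : Fin n, G i' l x = (x - x₀) ^ (-p : ℤ) * Y x i' l :=
        fun i' l => hGeq i' l x hx1 hx2
      have hSv : ∀ l : Fin n, S l j x = A x l j - (x - x₀)⁻¹ * aneg1 l j :=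
        fun l => hSeq l j x hx1 hx2
      have hsum : ∑ l, G i l x * (aneg1 l j + (x - x₀) * S l j x)
          = (x - x₀) * ((x - x₀) ^ (-p : ℤ) * (Y x * A x) i j) := by
        rw [Matrix.mul_apply, Finset.mul_sum]
        simp_rw [Finset.mul_sum]
        refine Finset.sum_congr rfl fun l _ => ?_
        rw [hGv i l, hSv l]
        have hut : (x - x₀) * (x - x₀)⁻¹ = 1 := mul_inv_cancel₀ hx0
        linear_combination (-(x - x₀) ^ (-p : ℤ) * Y x i l * aneg1 l j) * hut
      rw [hΦ]
      simp only [hder, hsum, hGv i j, Matrix.neg_apply]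
      have hut : (x - x₀) * (x - x₀)⁻¹ = 1 := mul_inv_cancel₀ hx0
      linear_combination (-(p : ℂ)) * (x - x₀) ^ (-p : ℤ) * Y x i j * hut
    have hx : Tendsto (fun x : ℂ => x - x₀) (𝓝[≠] x₀) (𝓝 0) := by
      have h : Tendsto (fun x : ℂ => x - x₀) (𝓝 x₀) (𝓝 (x₀ - x₀)) :=
        (continuous_sub_right x₀).tendsto x₀
      rw [sub_self] at h
      exact h.mono_left nhdsWithin_le_nhds
    have hlim : Tendsto Φ (𝓝[≠] x₀)
        (𝓝 ((0 : ℂ) * deriv (G i j) x₀ + (p : ℂ) * c 0 i j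
          + ∑ l, c 0 i l * (aneg1 l j + 0 * S l j x₀))) := by
      refine Tendsto.add (Tendsto.add ?_ ?_) ?_
      · exact hx.mul ((hGd i j).tendsto.mono_left nhdsWithin_le_nhds)
      · have h := ((hGc i j).tendsto.mono_left (nhdsWithin_le_nhds (s := {x₀}ᶜ))).const_mul (p : ℂ)
        rwa [hG0 i j] at h
      · refine tendsto_finset_sum _ fun l _ => ?_
        have hG := (hGc i l).tendsto.mono_left (nhdsWithin_le_nhds (s := {x₀}ᶜ))
        rw [hG0 i l] at hG
        exact hG.mul (tendsto_const_nhds.add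
          (hx.mul ((hSc l j).tendsto.mono_left nhdsWithin_le_nhds)))
    have h0 : Tendsto Φ (𝓝[≠] x₀) (𝓝 0) := by
      refine Tendsto.congr' ?_ (tendsto_const_nhds (α := ℂ))
      filter_upwards [hev] with x hx'
      exact hx'.symm
    have := tendsto_nhds_unique hlim h0
    simpa using this
  -- linear algebra conclusion
  have hM : c 0 * (aneg1 + (p : ℂ) • (1 : Matrix (Fin n) (Fin n) ℂ)) = 0 := by
    ext i j
    have h := main i j
    simp only [Matrix.mul_apply, Matrix.add_apply, Matrix.smul_apply, Matrix.one_apply,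
      Matrix.zero_apply, smul_eq_mul, mul_add]
    rw [Finset.sum_add_distrib]
    have h2 : ∑ l, c 0 i l * ((p : ℂ) * if l = j then 1 else 0) = (p : ℂ) * c 0 i j := by
      rw [Finset.sum_eq_single j]
      · simp [mul_comm]
      · intro l _ hl
        simp [hl]
      · intro hj
        exact absurd (Finset.mem_univ j) hj
    rw [h2]
    linear_combination h
  have hdet : (aneg1 + (p : ℂ) • (1 : Matrix (Fin n) (Fin n) ℂ)).det = 0 := by
    by_contra hdet
    have hu : IsUnit (aneg1 + (p : ℂ) • (1 : Matrix (Fin n) (Fin n) ℂ)).det :=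
      isUnit_iff_ne_zero.2 hdet
    have hz : c 0 = 0 := by
      calc c 0 = c 0 * ((aneg1 + (p : ℂ) • 1) * (aneg1 + (p : ℂ) • 1)⁻¹) := by
            rw [Matrix.mul_nonsing_inv _ hu, mul_one]
        _ = (c 0 * (aneg1 + (p : ℂ) • 1)) * (aneg1 + (p : ℂ) • 1)⁻¹ := by rw [mul_assoc]
        _ = 0 := by rw [hM, zero_mul]
    exact hc0 hz
  obtain ⟨v, hv0, hv⟩ := Matrix.exists_mulVec_eq_zero_iff.2 hdet
  refine ⟨v, hv0, ?_⟩
  have hadd : aneg1.mulVec v + (p : ℂ) • v = 0 := by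
    simpa [Matrix.add_mulVec, Matrix.smul_mulVec, Matrix.one_mulVec] using hv
  have := eq_neg_of_add_eq_zero_left hadd
  rw [this, ← neg_smul]
end

section
/- Let W be a fundamental solution of dW/dx = A(x)W on D such that W has form (2.2) with leading order m and the inverse matrix function W^{−1} has form (2.2) with leading order p. Then m and −p are eigenvalues of a₋₁, and moreover a₋₁ is either a scalar matrix (a complex multiple of the identity) or has at least two distinct integer eigenvalues. -/
open Filter Topology
open scoped ENNReal NNReal

variable {E : Type*} [NormedAddCommGroup E] [NormedSpace ℂ E]

lemma tendsto_coeff0 {f : ℕ → E} {F : ℂ → E} {x₀ : ℂ} {ρ : ℝ} (hρ : 0 < ρ)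
    (h : ∀ x : ℂ, 0 < ‖x - x₀‖ → ‖x - x₀‖ < ρ → HasSum (fun k : ℕ => (x - x₀) ^ k • f k) (F x)) :
    Tendsto F (𝓝[≠] x₀) (𝓝 (f 0)) := by
  set G : ℂ → E := fun z => if z = 0 then f 0 else F (x₀ + z) with hGdef
  have hGsum : ∀ z : ℂ, ‖z‖ < ρ → HasSum (fun k : ℕ => z ^ k • f k) (G z) := by
    intro z hz
    rcases eq_or_ne z 0 with rfl | hz0
    · simp only [hGdef, if_pos rfl]
      have := hasSum_single (f := fun k : ℕ => (0:ℂ) ^ k • f k) 0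
        (fun k hk => by simp [zero_pow hk])
      simpa using this
    · have h1 : (0:ℝ) < ‖(x₀ + z) - x₀‖ := by simpa using norm_pos_iff.2 hz0
      have h2 : ‖(x₀ + z) - x₀‖ < ρ := by simpa using hz
      have := h (x₀ + z) h1 h2
      simp only [add_sub_cancel_left] at this
      simpa [hGdef, if_neg hz0] using this
  -- bound on coefficients
  obtain ⟨C, hC⟩ : ∃ C, ∀ k : ℕ, ‖f k‖ * (ρ/2) ^ k ≤ C := by
    have hz : ‖((ρ/2 : ℝ) : ℂ)‖ < ρ := by
      rw [Complex.norm_real, Real.norm_eq_abs, abs_of_pos (by linarith)]; linarith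
    have hs := (hGsum _ hz).summable
    have ht : Tendsto (fun k : ℕ => ‖((ρ/2 : ℝ) : ℂ) ^ k • f k‖) atTop (𝓝 0) := by
      simpa using hs.tendsto_atTop_zero.norm
    obtain ⟨C, hC⟩ := ht.bddAbove_range
    refine ⟨C, fun k => ?_⟩
    have := hC (Set.mem_range_self k)
    calc ‖f k‖ * (ρ/2) ^ k = ‖((ρ/2 : ℝ) : ℂ) ^ k • f k‖ := by
          rw [norm_smul, norm_pow, Complex.norm_real, Real.norm_eq_abs, abs_of_pos (by linarith), mul_comm]
      _ ≤ C := this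
  set q : FormalMultilinearSeries ℂ ℂ E :=
    fun k => ContinuousMultilinearMap.mkPiRing ℂ (Fin k) (f k) with hqdef
  have hqnorm : ∀ k, ‖q k‖ = ‖f k‖ := fun k => ContinuousMultilinearMap.norm_mkPiRing _
  have hqapp : ∀ (k : ℕ) (y : ℂ), (q k fun _ => y) = y ^ k • f k := by
    intro k y
    simp [hqdef, ContinuousMultilinearMap.mkPiRing_apply]
  set r : NNReal := (ρ/2).toNNReal with hr
  have hrρ : (r : ℝ) = ρ/2 := Real.coe_toNNReal _ (by linarith)
  have hrpos : (0 : ℝ≥0∞) < (r : ℝ≥0∞) := by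
    simp only [ENNReal.coe_pos]
    rw [← NNReal.coe_pos, hrρ]; linarith
  have hball : HasFPowerSeriesOnBall G q 0 r := by
    refine ⟨q.le_radius_of_bound C fun k => ?_, hrpos, fun hy => ?_⟩
    · rw [hqnorm, hrρ]; exact hC k
    · rename_i y
      rw [EMetric.mem_ball, edist_zero_right] at hy
      have hy' : ‖y‖ < ρ := by
        have h1 : ‖y‖₊ < r := by exact_mod_cast hy
        have h2 := NNReal.coe_lt_coe.2 h1
        rw [coe_nnnorm, hrρ] at h2
        linarith
      rw [zero_add]
      simpa only [hqapp] using hGsum y hy'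
  have hcont : ContinuousAt G 0 := hball.hasFPowerSeriesAt.analyticAt.continuousAt
  have hG0 : G 0 = f 0 := if_pos rfl
  have h2 : Tendsto (fun x : ℂ => x - x₀) (𝓝 x₀) (𝓝 0) := by
    have := ((continuous_id.sub (continuous_const (y := x₀))).tendsto x₀)
    simpa [Pi.sub_def] using this
  have h1 : Tendsto (fun x : ℂ => G (x - x₀)) (𝓝 x₀) (𝓝 (f 0)) := by
    rw [← hG0]
    exact hcont.tendsto.comp h2
  have he : (fun x : ℂ => G (x - x₀)) =ᶠ[𝓝[≠] x₀] F := by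
    filter_upwards [self_mem_nhdsWithin] with x hx
    have hne : x - x₀ ≠ 0 := sub_ne_zero.2 hx
    simp [hGdef, if_neg hne]
  exact Filter.Tendsto.congr' he (h1.mono_left nhdsWithin_le_nhds)

lemma key_limit {E : Type*} [NormedAddCommGroup E] [NormedSpace ℂ E] [CompleteSpace E]
    {F M : ℂ → E} {x₀ : ℂ} {ρ : ℝ} (hρ : 0 < ρ) {q : ℤ} {B L : E}
    (hF : ∀ x : ℂ, 0 < ‖x - x₀‖ → ‖x - x₀‖ < ρ → HasDerivAt F (M x) x)
    (hlim1 : Tendsto (fun x => (x - x₀) ^ (-q) • F x) (𝓝[≠] x₀) (𝓝 B))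
    (hlim2 : Tendsto (fun x => (x - x₀) ^ (1 - q) • M x) (𝓝[≠] x₀) (𝓝 L)) :
    L = (q : ℂ) • B := by
  set D' : Set ℂ := {x | 0 < ‖x - x₀‖ ∧ ‖x - x₀‖ < ρ} with hD'
  have hD'eq : D' = Metric.ball x₀ ρ ∩ {x₀}ᶜ := by
    ext x
    simp [hD', Metric.mem_ball, dist_eq_norm, sub_ne_zero, and_comm, norm_pos_iff]
  have hopen : IsOpen D' := by
    rw [hD'eq]; exact Metric.isOpen_ball.inter isOpen_compl_singleton
  have hmem : D' ∈ 𝓝[≠] x₀ := by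
    rw [hD'eq]
    exact inter_mem (nhdsWithin_le_nhds (Metric.ball_mem_nhds x₀ hρ)) self_mem_nhdsWithin
  have hne : ∀ x ∈ D', x - x₀ ≠ 0 := fun x hx => by
    have := hx.1; rwa [norm_pos_iff] at this
  set g : ℂ → E := fun x => (x - x₀) ^ (-q) • F x with hg
  set gd : ℂ → E := fun x =>
    (x - x₀) ^ (-q) • M x + ((-q : ℂ) * (x - x₀) ^ (-q - 1)) • F x with hgd
  have hgderiv : ∀ x ∈ D', HasDerivAt g (gd x) x := by
    intro x hx
    have hc : HasDerivAt (fun y : ℂ => (y - x₀) ^ (-q)) ((-q : ℂ) * (x - x₀) ^ (-q - 1)) x := by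
      have h1 : HasDerivAt (fun y : ℂ => y - x₀) 1 x := (hasDerivAt_id x).sub_const x₀
      have h2 := hasDerivAt_zpow (-q) (x - x₀) (Or.inl (hne x hx))
      have := h2.comp x h1
      simpa [Int.cast_neg, mul_one, Function.comp_def] using this
    exact hc.smul (hF x hx.1 hx.2)
  set G : ℂ → E := Function.update g x₀ B with hG
  have hGc : ContinuousAt G x₀ := continuousAt_update_same.2 hlim1
  have hGeq : ∀ x ∈ D', G =ᶠ[𝓝 x] g := by
    intro x hx
    have hxne : x ≠ x₀ := fun h => by simp [h] at hne; exact (hne x hx) (by simp [h])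
    filter_upwards [isOpen_compl_singleton.mem_nhds (by simpa [hD'eq] using hxne : x ∈ ({x₀}ᶜ : Set ℂ))] with y hy
    exact Function.update_of_ne hy B g
  have hGev : ∀ᶠ z in 𝓝[≠] x₀, DifferentiableAt ℂ G z := by
    filter_upwards [hmem] with z hz
    exact (hGeq z hz).differentiableAt_iff.2 (hgderiv z hz).differentiableAt
  have hGanalytic := Complex.analyticAt_of_differentiable_on_punctured_nhds_of_continuousAt hGev hGc
  obtain ⟨s, hs_mem, hs⟩ := hGanalytic.eventually_analyticAt.exists_mem
  have hderivC : ContinuousAt (deriv G) x₀ :=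
    ((AnalyticOnNhd.deriv (fun y hy => hs y hy)) x₀ (mem_of_mem_nhds hs_mem)).continuousAt
  have hsub : Tendsto (fun x : ℂ => x - x₀) (𝓝 x₀) (𝓝 0) := by
    have := ((continuous_id.sub (continuous_const (y := x₀))).tendsto x₀)
    simpa [Pi.sub_def] using this
  have h0 : Tendsto (fun x => (x - x₀) • deriv G x) (𝓝 x₀) (𝓝 ((0:ℂ) • deriv G x₀)) :=
    hsub.smul hderivC.tendsto
  rw [zero_smul] at h0
  have hderiv_eq : ∀ x ∈ D', deriv G x = gd x := by
    intro x hx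
    have h1 : HasDerivAt G (gd x) x := (hgderiv x hx).congr_of_eventuallyEq (hGeq x hx)
    exact h1.deriv
  have h0' : Tendsto (fun x => (x - x₀) • gd x) (𝓝[≠] x₀) (𝓝 0) := by
    refine (h0.mono_left nhdsWithin_le_nhds).congr' ?_
    filter_upwards [hmem] with x hx
    rw [hderiv_eq x hx]
  have hident : ∀ x ∈ D', (x - x₀) • gd x
      = (x - x₀) ^ (1 - q) • M x + (-q : ℂ) • ((x - x₀) ^ (-q) • F x) := by
    intro x hx
    have hz := hne x hx
    simp only [hgd, smul_add, smul_smul]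
    congr 1
    · rw [← zpow_one_add₀ hz]
      ring_nf
    · congr 1
      rw [mul_comm ((-q : ℂ)) _, ← mul_assoc, ← zpow_one_add₀ hz]
      ring_nf
  have h0'' : Tendsto (fun x => (x - x₀) ^ (1 - q) • M x + (-q : ℂ) • ((x - x₀) ^ (-q) • F x))
      (𝓝[≠] x₀) (𝓝 0) := by
    refine h0'.congr' ?_
    filter_upwards [hmem] with x hx
    exact hident x hx
  have h1 : Tendsto (fun x => (x - x₀) ^ (1 - q) • M x + (-q : ℂ) • ((x - x₀) ^ (-q) • F x))
      (𝓝[≠] x₀) (𝓝 (L + (-q : ℂ) • B)) := hlim2.add (hlim1.const_smul _)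
  have huniq : L + (-q : ℂ) • B = 0 := by
    have : NeBot (𝓝[≠] x₀) := Module.punctured_nhds_neBot ℂ ℂ x₀
    exact tendsto_nhds_unique h1 h0''
  have hL : L = -((-q : ℂ) • B) := eq_neg_of_add_eq_zero_left huniq
  rw [hL, ← neg_smul, neg_neg]

section helpers
open scoped Matrix
variable {n : ℕ}

/-- entrywise matrix product on the pi type -/
noncomputable def mulE (M N : Fin n → Fin n → ℂ) : Fin n → Fin n → ℂ := fun i j => ∑ k, M i k * N k j

abbrev toE (M : Matrix (Fin n) (Fin n) ℂ) : Fin n → Fin n → ℂ := M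

lemma mulE_eq (M N : Matrix (Fin n) (Fin n) ℂ) :
    mulE (toE M) (toE N) = toE (M * N) := by
  funext i j
  show (∑ k, M i k * N k j) = (M * N) i j
  rw [Matrix.mul_apply]

open Filter in
lemma tendsto_mulE {α : Type*} {l : Filter α} {f g : α → (Fin n → Fin n → ℂ)}
    {M N : Fin n → Fin n → ℂ} (hf : Tendsto f l (𝓝 M)) (hg : Tendsto g l (𝓝 N)) :
    Tendsto (fun x => mulE (f x) (g x)) l (𝓝 (mulE M N)) := by
  refine tendsto_pi_nhds.2 fun i => tendsto_pi_nhds.2 fun j => ?_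
  refine tendsto_finset_sum _ fun k _ => Filter.Tendsto.mul ?_ ?_
  · exact tendsto_pi_nhds.1 (tendsto_pi_nhds.1 hf i) k
  · exact tendsto_pi_nhds.1 (tendsto_pi_nhds.1 hg k) j

lemma differentiableAt_det {M : ℂ → Matrix (Fin n) (Fin n) ℂ} {x : ℂ}
    (h : ∀ i j, DifferentiableAt ℂ (fun y => M y i j) x) :
    DifferentiableAt ℂ (fun y => (M y).det) x := by
  simp only [Matrix.det_apply']
  refine DifferentiableAt.fun_sum fun σ _ => DifferentiableAt.const_mul ?_ _
  exact DifferentiableAt.fun_finsetProd fun i _ => h (σ i) i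

lemma eig_iff_det (M : Matrix (Fin n) (Fin n) ℂ) (μ : ℂ) :
    (∃ v : Fin n → ℂ, v ≠ 0 ∧ M.mulVec v = μ • v) ↔ (M - μ • 1).det = 0 := by
  rw [← Matrix.exists_mulVec_eq_zero_iff]
  constructor
  · rintro ⟨v, hv, hMv⟩
    exact ⟨v, hv, by
      rw [Matrix.sub_mulVec, Matrix.smul_mulVec, Matrix.one_mulVec, hMv, sub_self]⟩
  · rintro ⟨v, hv, hMv⟩
    refine ⟨v, hv, ?_⟩
    rwa [Matrix.sub_mulVec, Matrix.smul_mulVec, Matrix.one_mulVec, sub_eq_zero] at hMv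

lemma left_eig_det (M : Matrix (Fin n) (Fin n) ℂ) (μ : ℂ) {w : Fin n → ℂ}
    (hw : w ≠ 0) (h : Matrix.vecMul w M = μ • w) : (M - μ • 1).det = 0 := by
  have h' : Mᵀ.mulVec w = μ • w := by
    rw [Matrix.mulVec_transpose, h]
  have := (eig_iff_det Mᵀ μ).1 ⟨w, hw, h'⟩
  rwa [show Mᵀ - μ • 1 = (M - μ • 1)ᵀ by
    rw [Matrix.transpose_sub, Matrix.transpose_smul, Matrix.transpose_one],
    Matrix.det_transpose] at this

end helpers

theorem stmt_4 (n : ℕ) (hn : 1 ≤ n) (x₀ : ℂ) (ρ₀ : ℝ) (hρ₀ : 0 < ρ₀)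
    (D : Set ℂ) (hD : D = {x : ℂ | 0 < ‖x - x₀‖ ∧ ‖x - x₀‖ < ρ₀})
    (A W : ℂ → Matrix (Fin n) (Fin n) ℂ)
    (aneg1 : Matrix (Fin n) (Fin n) ℂ) (a : ℕ → Matrix (Fin n) (Fin n) ℂ)
    -- A(x) = (x−x₀)⁻¹ • a₋₁ + Σ_{k≥0} a_k (x−x₀)^k, converging on D
    (hA : ∀ x ∈ D, HasSum (fun k : ℕ => ((x - x₀) ^ k) • a k)
      (A x - (x - x₀)⁻¹ • aneg1))
    -- W is a fundamental solution of dW/dx = A(x) W on D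
    (hW : ∀ x ∈ D, ∀ i j, HasDerivAt (fun y => W y i j) ((A x * W x) i j) x)
    (hdet : ∀ x ∈ D, (W x).det ≠ 0)
    -- W has form (2.2) with leading order m
    (m : ℤ) (b : ℕ → Matrix (Fin n) (Fin n) ℂ) (hb0 : b 0 ≠ 0)
    (hWsum : ∀ x ∈ D, HasSum (fun k : ℕ => ((x - x₀) ^ (m + k : ℤ)) • b k) (W x))
    -- W⁻¹ has form (2.2) with leading order p
    (p : ℤ) (c : ℕ → Matrix (Fin n) (Fin n) ℂ) (hc0 : c 0 ≠ 0)
    (hYsum : ∀ x ∈ D, HasSum (fun k : ℕ => ((x - x₀) ^ (p + k : ℤ)) • c k) ((W x)⁻¹)) :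
    (∃ v : Fin n → ℂ, v ≠ 0 ∧ aneg1.mulVec v = (m : ℂ) • v) ∧
    (∃ v : Fin n → ℂ, v ≠ 0 ∧ aneg1.mulVec v = (-(p : ℂ)) • v) ∧
    ((∃ μ : ℂ, aneg1 = μ • (1 : Matrix (Fin n) (Fin n) ℂ)) ∨
      (∃ k l : ℤ, k ≠ l ∧
        (∃ v : Fin n → ℂ, v ≠ 0 ∧ aneg1.mulVec v = (k : ℂ) • v) ∧
        (∃ v : Fin n → ℂ, v ≠ 0 ∧ aneg1.mulVec v = (l : ℂ) • v))) := by
  haveI : NeBot (𝓝[≠] x₀) := Module.punctured_nhds_neBot ℂ ℂ x₀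
  -- basic facts about D
  have hDmem' : ∀ x : ℂ, 0 < ‖x - x₀‖ → ‖x - x₀‖ < ρ₀ → x ∈ D := by
    rw [hD]; exact fun x h1 h2 => ⟨h1, h2⟩
  have hDdef : ∀ x ∈ D, 0 < ‖x - x₀‖ ∧ ‖x - x₀‖ < ρ₀ := by
    rw [hD]; exact fun x h => h
  have hne : ∀ x ∈ D, x - x₀ ≠ 0 := fun x hx => by
    have := (hDdef x hx).1; rwa [norm_pos_iff] at this
  have hDeq : D = Metric.ball x₀ ρ₀ ∩ {x₀}ᶜ := by
    rw [hD]; ext x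
    simp [Metric.mem_ball, dist_eq_norm, sub_ne_zero, and_comm, norm_pos_iff]
  have hDopen : IsOpen D := by
    rw [hDeq]; exact Metric.isOpen_ball.inter isOpen_compl_singleton
  have hDnhds : D ∈ 𝓝[≠] x₀ := by
    rw [hDeq]
    exact inter_mem (nhdsWithin_le_nhds (Metric.ball_mem_nhds x₀ hρ₀)) self_mem_nhdsWithin
  -- limits of the leading parts
  have hWlim : Tendsto (fun x => (x - x₀) ^ (-m) • toE (W x)) (𝓝[≠] x₀) (𝓝 (toE (b 0))) := by
    refine tendsto_coeff0 (f := fun k => toE (b k)) hρ₀ ?_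
    intro x h1 h2
    have hx : x ∈ D := hDmem' x h1 h2
    have hz : x - x₀ ≠ 0 := hne x hx
    have h3 := (hWsum x hx).const_smul ((x - x₀) ^ (-m))
    have heq : (fun k : ℕ => ((x - x₀) ^ k) • toE (b k))
        = fun k : ℕ => (x - x₀) ^ (-m) • (((x - x₀) ^ (m + k : ℤ)) • toE (b k)) := by
      funext k
      rw [smul_smul, ← zpow_natCast (x - x₀) k, ← zpow_add₀ hz]
      congr 2
      ring
    rw [heq]
    exact h3
  have hYlim : Tendsto (fun x => (x - x₀) ^ (-p) • toE ((W x)⁻¹)) (𝓝[≠] x₀) (𝓝 (toE (c 0))) := by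
    refine tendsto_coeff0 (f := fun k => toE (c k)) hρ₀ ?_
    intro x h1 h2
    have hx : x ∈ D := hDmem' x h1 h2
    have hz : x - x₀ ≠ 0 := hne x hx
    have h3 := (hYsum x hx).const_smul ((x - x₀) ^ (-p))
    have heq : (fun k : ℕ => ((x - x₀) ^ k) • toE (c k))
        = fun k : ℕ => (x - x₀) ^ (-p) • (((x - x₀) ^ (p + k : ℤ)) • toE (c k)) := by
      funext k
      rw [smul_smul, ← zpow_natCast (x - x₀) k, ← zpow_add₀ hz]
      congr 2
      ring
    rw [heq]
    exact h3
  have hAlim : Tendsto (fun x => (x - x₀) • toE (A x)) (𝓝[≠] x₀) (𝓝 (toE aneg1)) := by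
    have hSlim : Tendsto (fun x => toE (A x - (x - x₀)⁻¹ • aneg1)) (𝓝[≠] x₀) (𝓝 (toE (a 0))) :=
      tendsto_coeff0 (f := fun k => toE (a k)) hρ₀
        (fun x h1 h2 => hA x (hDmem' x h1 h2))
    have hsub : Tendsto (fun x : ℂ => x - x₀) (𝓝[≠] x₀) (𝓝 0) := by
      have := ((continuous_id.sub (continuous_const (y := x₀))).tendsto x₀)
      exact (by simpa [Pi.sub_def] using this : Tendsto (fun x : ℂ => x - x₀) (𝓝 x₀) (𝓝 0)).mono_left
        nhdsWithin_le_nhds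
    have h1 : Tendsto (fun x => (x - x₀) • toE (A x - (x - x₀)⁻¹ • aneg1) + toE aneg1)
        (𝓝[≠] x₀) (𝓝 ((0 : ℂ) • toE (a 0) + toE aneg1)) :=
      (hsub.smul hSlim).add tendsto_const_nhds
    rw [zero_smul, zero_add] at h1
    refine h1.congr' ?_
    filter_upwards [hDnhds] with x hx
    have hz : x - x₀ ≠ 0 := hne x hx
    funext i j
    show (x - x₀) * ((A x - (x - x₀)⁻¹ • aneg1) i j) + aneg1 i j = (x - x₀) * A x i j
    rw [Matrix.sub_apply, Matrix.smul_apply, smul_eq_mul, mul_sub, ← mul_assoc,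
      mul_inv_cancel₀ hz, one_mul, sub_add_cancel]
  -- W as pi-valued differentiable function
  have hWd : ∀ x ∈ D, HasDerivAt (fun y => toE (W y)) (toE (A x * W x)) x := by
    intro x hx
    exact hasDerivAt_pi.2 fun i => hasDerivAt_pi.2 fun j => hW x hx i j
  -- first key identity : aneg1 * b 0 = m • b 0
  have hMlim1 : Tendsto (fun x => (x - x₀) ^ (1 - m) • toE (A x * W x)) (𝓝[≠] x₀)
      (𝓝 (mulE (toE aneg1) (toE (b 0)))) := by
    refine (tendsto_mulE hAlim hWlim).congr' ?_
    filter_upwards [hDnhds] with x hx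
    have hz : x - x₀ ≠ 0 := hne x hx
    have hpow : (x - x₀) * (x - x₀) ^ (-m) = (x - x₀) ^ (1 - m) := by
      rw [show (1 : ℤ) - m = 1 + -m from sub_eq_add_neg 1 m, zpow_add₀ hz, zpow_one]
    funext i j
    show (∑ k, ((x - x₀) * A x i k) * ((x - x₀) ^ (-m) * W x k j))
        = (x - x₀) ^ (1 - m) * (A x * W x) i j
    rw [Matrix.mul_apply, Finset.mul_sum]
    refine Finset.sum_congr rfl fun k _ => ?_
    rw [mul_mul_mul_comm, hpow]
  have key1E : mulE (toE aneg1) (toE (b 0)) = (m : ℂ) • toE (b 0) :=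
    key_limit hρ₀ (fun x h1 h2 => hWd x (hDmem' x h1 h2)) hWlim hMlim1
  have key1 : aneg1 * b 0 = (m : ℂ) • b 0 := by
    have h := key1E
    rw [mulE_eq] at h
    exact h
  -- inverse is differentiable with derivative -(W⁻¹ * A)
  have hWY : ∀ x ∈ D, W x * (W x)⁻¹ = 1 := fun x hx =>
    Matrix.mul_nonsing_inv _ (Ne.isUnit (hdet x hx))
  have hYW : ∀ x ∈ D, (W x)⁻¹ * W x = 1 := fun x hx =>
    Matrix.nonsing_inv_mul _ (Ne.isUnit (hdet x hx))
  have hYdiff : ∀ x ∈ D, ∀ i j, DifferentiableAt ℂ (fun y => (W y)⁻¹ i j) x := by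
    intro x hx i j
    have hWdiff : ∀ i j, DifferentiableAt ℂ (fun y => W y i j) x :=
      fun i j => (hW x hx i j).differentiableAt
    have hdetd : DifferentiableAt ℂ (fun y => (W y).det) x := differentiableAt_det hWdiff
    have hadj : DifferentiableAt ℂ (fun y => (W y).adjugate i j) x := by
      have heq : (fun y => (W y).adjugate i j)
          = fun y => ((W y).updateRow j (Pi.single i 1)).det := by
        funext y; rw [Matrix.adjugate_apply]
      rw [heq]
      refine differentiableAt_det fun i' j' => ?_
      simp only [Matrix.updateRow_apply]
      by_cases h : i' = j
      · simp [h]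
      · simp only [if_neg h]
        exact hWdiff i' j'
    have heq2 : (fun y => (W y)⁻¹ i j) = fun y => ((W y).det)⁻¹ * (W y).adjugate i j := by
      funext y
      rw [Matrix.inv_def, Matrix.smul_apply, Ring.inverse_eq_inv, smul_eq_mul]
    rw [heq2]
    exact (hdetd.inv (hdet x hx)).mul hadj
  have hYd : ∀ x ∈ D, ∀ i j, HasDerivAt (fun y => (W y)⁻¹ i j)
      (deriv (fun y => (W y)⁻¹ i j) x) x :=
    fun x hx i j => (hYdiff x hx i j).hasDerivAt
  have hYd_eq : ∀ x ∈ D,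
      (fun i j => deriv (fun y => (W y)⁻¹ i j) x) = toE (-((W x)⁻¹ * A x)) := by
    intro x hx
    have hmat : (A x * W x) * (W x)⁻¹ + W x * Matrix.of (fun i j => deriv (fun y => (W y)⁻¹ i j) x) = 0 := by
      ext i j
      have h1 : HasDerivAt (fun y => ∑ k, W y i k * (W y)⁻¹ k j)
          (∑ k, ((A x * W x) i k * (W x)⁻¹ k j
            + W x i k * deriv (fun y => (W y)⁻¹ k j) x)) x :=
        HasDerivAt.fun_sum fun k _ => (hW x hx i k).mul (hYd x hx k j)
      have h2 : HasDerivAt (fun y => ∑ k, W y i k * (W y)⁻¹ k j) 0 x := by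
        refine (hasDerivAt_const x ((1 : Matrix (Fin n) (Fin n) ℂ) i j)).congr_of_eventuallyEq ?_
        filter_upwards [hDopen.mem_nhds hx] with y hy
        rw [← Matrix.mul_apply, hWY y hy]
      have h3 := h1.unique h2
      show ((A x * W x) * (W x)⁻¹) i j
          + (W x * Matrix.of (fun i j => deriv (fun y => (W y)⁻¹ i j) x)) i j = 0
      rw [Matrix.mul_apply, Matrix.mul_apply, ← Finset.sum_add_distrib]
      exact h3
    have h5 : (A x * W x) * (W x)⁻¹ = A x := by
      rw [Matrix.mul_assoc, hWY x hx, Matrix.mul_one]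
    rw [h5] at hmat
    have h4 : W x * Matrix.of (fun i j => deriv (fun y => (W y)⁻¹ i j) x) = -(A x) :=
      eq_neg_of_add_eq_zero_right hmat
    have h6 : Matrix.of (fun i j => deriv (fun y => (W y)⁻¹ i j) x) = -((W x)⁻¹ * A x) := by
      calc Matrix.of (fun i j => deriv (fun y => (W y)⁻¹ i j) x)
          = ((W x)⁻¹ * W x) * Matrix.of (fun i j => deriv (fun y => (W y)⁻¹ i j) x) := by
            rw [hYW x hx, Matrix.one_mul]
        _ = (W x)⁻¹ * (W x * Matrix.of (fun i j => deriv (fun y => (W y)⁻¹ i j) x)) := by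
            rw [Matrix.mul_assoc]
        _ = (W x)⁻¹ * -(A x) := by rw [h4]
        _ = -((W x)⁻¹ * A x) := by rw [Matrix.mul_neg]
    exact h6
  have hYdrv : ∀ x ∈ D, HasDerivAt (fun y => toE ((W y)⁻¹)) (toE (-((W x)⁻¹ * A x))) x := by
    intro x hx
    rw [← hYd_eq x hx]
    exact hasDerivAt_pi.2 fun i => hasDerivAt_pi.2 fun j => hYd x hx i j
  -- second key identity : c 0 * aneg1 = -p • c 0
  have hMlim2 : Tendsto (fun x => (x - x₀) ^ (1 - p) • toE (-((W x)⁻¹ * A x))) (𝓝[≠] x₀)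
      (𝓝 (-(mulE (toE (c 0)) (toE aneg1)))) := by
    refine ((tendsto_mulE hYlim hAlim).neg).congr' ?_
    filter_upwards [hDnhds] with x hx
    have hz : x - x₀ ≠ 0 := hne x hx
    have hpow : (x - x₀) ^ (-p) * (x - x₀) = (x - x₀) ^ (1 - p) := by
      rw [show (1 : ℤ) - p = -p + 1 by ring, zpow_add₀ hz, zpow_one]
    funext i j
    show -(∑ k, ((x - x₀) ^ (-p) * (W x)⁻¹ i k) * ((x - x₀) * A x k j))
        = (x - x₀) ^ (1 - p) * (-((W x)⁻¹ * A x)) i j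
    rw [Matrix.neg_apply, Matrix.mul_apply, mul_neg, neg_inj, Finset.mul_sum]
    refine Finset.sum_congr rfl fun k _ => ?_
    rw [mul_mul_mul_comm, hpow]
  have key2E : -(mulE (toE (c 0)) (toE aneg1)) = (p : ℂ) • toE (c 0) :=
    key_limit hρ₀ (fun x h1 h2 => hYdrv x (hDmem' x h1 h2)) hYlim hMlim2
  have key2 : c 0 * aneg1 = (-(p : ℂ)) • c 0 := by
    have h := key2E
    rw [mulE_eq] at h
    have h2 : c 0 * aneg1 = -((p : ℂ) • c 0) := by
      rw [← show -(c 0 * aneg1) = (p : ℂ) • c 0 from h, neg_neg]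
    rw [h2, ← neg_smul]
  -- third key identity
  have key3 : m + p = 0 → b 0 * c 0 = 1 := by
    intro hmp
    have hprod := tendsto_mulE hWlim hYlim
    have hconst : Tendsto (fun _ : ℂ => toE (1 : Matrix (Fin n) (Fin n) ℂ)) (𝓝[≠] x₀)
        (𝓝 (toE (1 : Matrix (Fin n) (Fin n) ℂ))) := tendsto_const_nhds
    have hcongr : (fun x => mulE ((x - x₀) ^ (-m) • toE (W x)) ((x - x₀) ^ (-p) • toE ((W x)⁻¹)))
        =ᶠ[𝓝[≠] x₀] fun _ => toE (1 : Matrix (Fin n) (Fin n) ℂ) := by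
      filter_upwards [hDnhds] with x hx
      have hz : x - x₀ ≠ 0 := hne x hx
      have hpow : (x - x₀) ^ (-m) * (x - x₀) ^ (-p) = 1 := by
        rw [← zpow_add₀ hz, show -m + -p = 0 by omega, zpow_zero]
      funext i j
      show (∑ k, ((x - x₀) ^ (-m) * W x i k) * ((x - x₀) ^ (-p) * (W x)⁻¹ k j))
          = (1 : Matrix (Fin n) (Fin n) ℂ) i j
      rw [← hWY x hx, Matrix.mul_apply]
      refine Finset.sum_congr rfl fun k _ => ?_
      rw [mul_mul_mul_comm, hpow, one_mul]
    have huniq : mulE (toE (b 0)) (toE (c 0)) = toE (1 : Matrix (Fin n) (Fin n) ℂ) :=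
      tendsto_nhds_unique (hprod.congr' hcongr) hconst
    rw [mulE_eq] at huniq
    exact huniq
  -- eigenvector for m
  obtain ⟨i0, j0, hb00⟩ : ∃ i j, b 0 i j ≠ 0 := by
    by_contra h
    push_neg at h
    exact hb0 (by ext i j; simpa using h i j)
  have hv1 : ∃ v : Fin n → ℂ, v ≠ 0 ∧ aneg1.mulVec v = (m : ℂ) • v := by
    refine ⟨fun i => b 0 i j0, ?_, ?_⟩
    · intro h
      exact hb00 (congrFun h i0)
    · funext i
      have h := congrFun (congrFun key1 i) j0
      rw [Matrix.mul_apply, Matrix.smul_apply, smul_eq_mul] at h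
      show ∑ k, aneg1 i k * b 0 k j0 = (m : ℂ) * b 0 i j0
      exact h
  -- eigenvector for -p
  obtain ⟨i1, j1, hc00⟩ : ∃ i j, c 0 i j ≠ 0 := by
    by_contra h
    push_neg at h
    exact hc0 (by ext i j; simpa using h i j)
  have hw1 : (fun k => c 0 i1 k) ≠ (0 : Fin n → ℂ) := by
    intro h
    exact hc00 (congrFun h j1)
  have hleft : Matrix.vecMul (fun k => c 0 i1 k) aneg1 = (-(p : ℂ)) • (fun k => c 0 i1 k) := by
    funext j
    have h := congrFun (congrFun key2 i1) j
    rw [Matrix.mul_apply, Matrix.smul_apply, smul_eq_mul] at h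
    show ∑ k, c 0 i1 k * aneg1 k j = -(p : ℂ) * c 0 i1 j
    exact h
  have hdet2 : (aneg1 - (-(p : ℂ)) • 1).det = 0 := left_eig_det _ _ hw1 hleft
  have hv2 : ∃ v : Fin n → ℂ, v ≠ 0 ∧ aneg1.mulVec v = (-(p : ℂ)) • v :=
    (eig_iff_det _ _).2 hdet2
  refine ⟨hv1, hv2, ?_⟩
  by_cases hmp : m = -p
  · left
    refine ⟨(m : ℂ), ?_⟩
    have h1 : b 0 * c 0 = 1 := key3 (by omega)
    calc aneg1 = aneg1 * (b 0 * c 0) := by rw [h1, Matrix.mul_one]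
      _ = (aneg1 * b 0) * c 0 := by rw [Matrix.mul_assoc]
      _ = ((m : ℂ) • b 0) * c 0 := by rw [key1]
      _ = (m : ℂ) • (b 0 * c 0) := by rw [Matrix.smul_mul]
      _ = (m : ℂ) • 1 := by rw [h1]
  · right
    refine ⟨m, -p, by omega, hv1, ?_⟩
    have hcast : ((-p : ℤ) : ℂ) = -(p : ℂ) := by push_cast; ring
    rw [hcast]
    exact hv2
end

section
/- Let r be a polynomial with complex coefficients of degree ≥ 2. Then r does not satisfy conditions (6.3): it is not the case that every root z of r satisfies both r'(z) ≠ 0 and r''(z) = 0. Equivalently, there is no complex polynomial of degree ≥ 2 all of whose roots are simple and at each of which its second derivative vanishes. -/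
/- STATEMENT 13: No complex polynomial of degree ≥ 2 has all roots simple with its
   second derivative vanishing at each root, i.e. a polynomial of degree ≥ 2 does not
   satisfy conditions (6.3). -/
theorem stmt_13 (r : Polynomial ℂ) (hdeg : 2 ≤ r.natDegree) :
    ¬ ∀ z : ℂ, r.eval z = 0 →
      r.derivative.eval z ≠ 0 ∧ r.derivative.derivative.eval z = 0 := by
  intro H
  have hr0 : r ≠ 0 := by
    intro h; simp [h] at hdeg
  have hcard : r.roots.card = r.natDegree :=
    Polynomial.splits_iff_card_roots.mp (IsAlgClosed.splits r)
  -- every root has multiplicity exactly 1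
  have hcount : ∀ z : ℂ, r.roots.count z ≤ 1 := by
    intro z
    by_cases hz : r.eval z = 0
    · have h1 := (H z hz).1
      have hd : Polynomial.rootMultiplicity z r.derivative = 0 :=
        Polynomial.rootMultiplicity_eq_zero (by simpa [Polynomial.IsRoot] using h1)
      have := Polynomial.derivative_rootMultiplicity_of_root (p := r) (t := z) hz
      rw [Polynomial.count_roots]
      omega
    · rw [Polynomial.count_roots, Polynomial.rootMultiplicity_eq_zero
        (by simpa [Polynomial.IsRoot] using hz)]
      omega
  -- roots of r are contained in roots of r''
  have hnd1 : r.derivative.natDegree = r.natDegree - 1 :=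
    Polynomial.natDegree_eq_of_degree_eq_some (Polynomial.degree_derivative_eq r (by omega))
  have hdd := Polynomial.degree_derivative_eq r.derivative (by omega)
  have hrdd0 : r.derivative.derivative ≠ 0 := by
    intro h
    rw [h, Polynomial.degree_zero] at hdd
    simp at hdd
  have hle : r.roots ≤ r.derivative.derivative.roots := by
    rw [Multiset.le_iff_count]
    intro z
    rcases Nat.lt_or_ge (r.roots.count z) 1 with h | h
    · omega
    · have hz : r.eval z = 0 := by
        have : z ∈ r.roots := Multiset.count_pos.mp (by omega)
        exact (Polynomial.isRoot_of_mem_roots this)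
      have h2 := (H z hz).2
      have : 1 ≤ r.derivative.derivative.roots.count z := by
        rw [Polynomial.count_roots]
        exact (Polynomial.rootMultiplicity_pos hrdd0).mpr h2
      have hc := hcount z
      omega
  have h1 := Multiset.card_le_card hle
  have h2 := Polynomial.card_roots' r.derivative.derivative
  have h3 := Polynomial.natDegree_derivative_le r.derivative
  have h4 := Polynomial.natDegree_derivative_le r
  omega
end

section
/- Let U ⊆ ℂ be open and let σ be a meromorphic function on U satisfying the fifth Painlevé equation in sigma form, i.e. (zσ''(z))² + 4(zσ'(z) − σ(z))·(zσ'(z) − σ(z) + (σ'(z))²) = 0 at every point z ∈ U where σ is holomorphic. Then every pole z₀ ∈ U of σ is a simple pole, and the residue of σ at z₀ equals z₀. -/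
/- STATEMENT 17: If σ is meromorphic on an open set U ⊆ ℂ and satisfies the fifth
   Painlevé equation in sigma form at every point of U where it is holomorphic, then
   every pole z₀ ∈ U of σ is simple with residue z₀. -/
open Filter Topology

lemma stmt17_aux_deriv {g : ℂ → ℂ} {x : ℂ} (h : AnalyticAt ℂ g x) :
    AnalyticAt ℂ (deriv g) x := by
  obtain ⟨s, hs, hgs⟩ := h.exists_mem_nhds_analyticOnNhd
  exact hgs.deriv x (mem_of_mem_nhds hs)

theorem stmt_17 (U : Set ℂ) (hU : IsOpen U) (σ : ℂ → ℂ)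
    (hσ : MeromorphicOn σ U)
    -- the fifth Painlevé equation in sigma form, at points where σ is holomorphic
    (heq : ∀ z ∈ U, AnalyticAt ℂ σ z →
      (z * deriv (deriv σ) z) ^ 2
        + 4 * (z * deriv σ z - σ z) *
            (z * deriv σ z - σ z + (deriv σ z) ^ 2) = 0) :
    ∀ z₀ : ℂ, ∀ hz₀ : z₀ ∈ U,
      -- if z₀ is a pole of σ …
      meromorphicOrderAt σ z₀ < 0 →
      -- … then it is a simple pole and the residue of σ at z₀ equals z₀
      meromorphicOrderAt σ z₀ = -1 ∧
        Filter.Tendsto (fun z => (z - z₀) * σ z) (nhdsWithin z₀ {z₀}ᶜ) (nhds z₀) := by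
  intro z₀ hz₀ hord
  have hM : MeromorphicAt σ z₀ := hσ z₀ hz₀
  have hne : meromorphicOrderAt σ z₀ ≠ ⊤ := (hord.trans_le le_top).ne
  obtain ⟨n, hn⟩ := WithTop.ne_top_iff_exists.mp hne
  have hnneg : n < 0 := by
    rw [← hn] at hord; exact_mod_cast hord
  obtain ⟨k, rfl⟩ : ∃ k : ℕ, n = -((k : ℤ) + 1) := ⟨(-n - 1).toNat, by omega⟩
  obtain ⟨g, hg, hgz₀, hfg⟩ := (meromorphicOrderAt_eq_int_iff (hσ z₀ hz₀)).mp hn.symm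
  have hfg' : ∀ᶠ z in 𝓝[≠] z₀, σ z = g z / (z - z₀) ^ (k + 1) := by
    filter_upwards [hfg, self_mem_nhdsWithin] with z h1 h2
    rw [h1, smul_eq_mul,
      show -((k : ℤ) + 1) = -((k + 1 : ℕ) : ℤ) by push_cast; ring,
      zpow_neg, zpow_natCast, inv_mul_eq_div]
  -- an open punctured neighbourhood where everything is nice
  have hall : ∀ᶠ z in 𝓝[≠] z₀,
      (z ∈ U ∧ AnalyticAt ℂ g z) ∧ σ z = g z / (z - z₀) ^ (k + 1) ∧ AnalyticAt ℂ σ z :=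
    (((hU.eventually_mem hz₀).and hg.eventually_analyticAt).filter_mono
      nhdsWithin_le_nhds).and (hfg'.and hM.eventually_analyticAt)
  rw [eventually_nhdsWithin_iff] at hall
  obtain ⟨V, hVsub, hVo, hz₀V⟩ := mem_nhds_iff.mp hall
  set W : Set ℂ := V \ {z₀} with hW_def
  have hWo : IsOpen W := hVo.sdiff isClosed_singleton
  have hWmem : W ∈ 𝓝[≠] z₀ := by
    rw [hW_def, Set.diff_eq]
    exact Filter.inter_mem (mem_nhdsWithin_of_mem_nhds (hVo.mem_nhds hz₀V))
      self_mem_nhdsWithin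
  have hWprop : ∀ z ∈ W, z ∈ U ∧ AnalyticAt ℂ g z ∧
      σ z = g z / (z - z₀) ^ (k + 1) ∧ AnalyticAt ℂ σ z := by
    intro z hz
    have := hVsub hz.1 hz.2
    exact ⟨this.1.1, this.1.2, this.2.1, this.2.2⟩
  have hWne : ∀ z ∈ W, z - z₀ ≠ 0 := by
    intro z hz
    exact sub_ne_zero.mpr hz.2
  -- the auxiliary functions A and B
  set A : ℂ → ℂ := fun y => (y - z₀) * deriv g y - ((k : ℂ) + 1) * g y with hA_def
  set B : ℂ → ℂ := fun y => (y - z₀) ^ 2 * deriv (deriv g) y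
      - 2 * ((k : ℂ) + 1) * (y - z₀) * deriv g y
      + ((k : ℂ) + 1) * ((k : ℂ) + 2) * g y with hB_def
  -- first derivative of σ on W
  have hF1 : ∀ z ∈ W, HasDerivAt (fun y => g y / (y - z₀) ^ (k + 1))
      (A z / (z - z₀) ^ (k + 2)) z := by
    intro z hz
    have ht := hWne z hz
    have hganz := (hWprop z hz).2.1
    have hpow : HasDerivAt (fun y => (y - z₀) ^ (k + 1)) (((k : ℂ) + 1) * (z - z₀) ^ k) z := by
      simpa using ((hasDerivAt_id z).sub_const z₀).fun_pow (k + 1)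
    have h := (hganz.differentiableAt.hasDerivAt).fun_div hpow (pow_ne_zero _ ht)
    refine h.congr_deriv ?_
    simp only [hA_def]
    field_simp
    ring
  have hF2 : ∀ z ∈ W, HasDerivAt (fun y => A y / (y - z₀) ^ (k + 2))
      (B z / (z - z₀) ^ (k + 3)) z := by
    intro z hz
    have ht := hWne z hz
    have hganz := (hWprop z hz).2.1
    have hpow : HasDerivAt (fun y => (y - z₀) ^ (k + 2))
        (((k : ℂ) + 2) * (z - z₀) ^ (k + 1)) z := by
      have := ((hasDerivAt_id z).sub_const z₀).fun_pow (k + 2)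
      norm_num at this
      convert this using 2
    have hAder : HasDerivAt A
        (deriv g z + (z - z₀) * deriv (deriv g) z - ((k : ℂ) + 1) * deriv g z) z := by
      have h1 := (((hasDerivAt_id z).sub_const z₀).fun_mul
        ((stmt17_aux_deriv hganz).differentiableAt.hasDerivAt))
      have h2 := (hganz.differentiableAt.hasDerivAt).const_mul ((k : ℂ) + 1)
      simpa [hA_def] using h1.fun_sub h2
    have h := hAder.fun_div hpow (pow_ne_zero _ ht)
    refine h.congr_deriv ?_
    simp only [hA_def, hB_def]
    field_simp
    ring
  have hdσ : ∀ z ∈ W, deriv σ z = A z / (z - z₀) ^ (k + 2) := by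
    intro z hz
    have hev : σ =ᶠ[𝓝 z] (fun y => g y / (y - z₀) ^ (k + 1)) := by
      filter_upwards [hWo.mem_nhds hz] with y hy using (hWprop y hy).2.2.1
    rw [hev.deriv_eq]
    exact (hF1 z hz).deriv
  have hdσ2 : ∀ z ∈ W, deriv (deriv σ) z = B z / (z - z₀) ^ (k + 3) := by
    intro z hz
    have hev : deriv σ =ᶠ[𝓝 z] (fun y => A y / (y - z₀) ^ (k + 2)) := by
      filter_upwards [hWo.mem_nhds hz] with y hy using hdσ y hy
    rw [hev.deriv_eq]
    exact (hF2 z hz).deriv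
  -- relations at points of W
  have hrel : ∀ z ∈ W, A z = deriv σ z * (z - z₀) ^ (k + 2)
      ∧ B z = deriv (deriv σ) z * (z - z₀) ^ (k + 3)
      ∧ g z = σ z * (z - z₀) ^ (k + 1) := by
    intro z hz
    have ht := hWne z hz
    refine ⟨?_, ?_, ?_⟩
    · rw [hdσ z hz, div_mul_cancel₀ _ (pow_ne_zero _ ht)]
    · rw [hdσ2 z hz, div_mul_cancel₀ _ (pow_ne_zero _ ht)]
    · rw [(hWprop z hz).2.2.1, div_mul_cancel₀ _ (pow_ne_zero _ ht)]
  -- continuity facts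
  have hc1 : ContinuousAt g z₀ := hg.continuousAt
  have hc2 : ContinuousAt (deriv g) z₀ := (stmt17_aux_deriv hg).continuousAt
  have hc3 : ContinuousAt (deriv (deriv g)) z₀ :=
    (stmt17_aux_deriv (stmt17_aux_deriv hg)).continuousAt
  by_cases hz00 : z₀ = 0
  · -- z₀ = 0 : impossible, no pole at 0
    exfalso
    subst hz00
    set Φ : ℂ → ℂ := fun z => z ^ (k + 1) * (B z) ^ 2
        + 4 * (A z - g z) * ((A z) ^ 2 + z ^ (k + 2) * (z * A z - z * g z)) with hΦ_def
    have hΦW : ∀ z ∈ W, Φ z = 0 := by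
      intro z hz
      have ht : z ≠ 0 := by simpa [sub_zero] using hWne z hz
      obtain ⟨hA', hB', hg'⟩ := hrel z hz
      rw [sub_zero] at hA' hB' hg'
      have hE := heq z (hWprop z hz).1 (hWprop z hz).2.2.2
      have h2 : z * Φ z = 0 := by
        simp only [hΦ_def]
        rw [hA', hB', hg']
        linear_combination (z ^ (3 * k + 5) * z) * hE
      exact (mul_eq_zero.mp h2).resolve_left ht
    have hΦc : ContinuousAt Φ 0 := by
      simp only [hΦ_def, hA_def, hB_def]
      fun_prop
    have hlim1 : Tendsto Φ (𝓝[≠] (0 : ℂ)) (𝓝 (Φ 0)) :=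
      hΦc.tendsto.mono_left nhdsWithin_le_nhds
    have hlim2 : Tendsto Φ (𝓝[≠] (0 : ℂ)) (𝓝 0) := by
      apply Tendsto.congr' _ tendsto_const_nhds
      filter_upwards [hWmem] with z hz using (hΦW z hz).symm
    have hval : Φ 0 = 0 := tendsto_nhds_unique hlim1 hlim2
    simp only [hΦ_def, hA_def, hB_def] at hval
    rw [zero_pow (show k + 1 ≠ 0 by omega), zero_pow (show k + 2 ≠ 0 by omega)] at hval
    have h4 : (4 : ℂ) * ((k : ℂ) + 2) * (((k : ℂ) + 1) ^ 2) * (g 0) ^ 3 = 0 := by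
      linear_combination -hval
    have hk1 : ((k : ℂ) + 1) ≠ 0 := Nat.cast_add_one_ne_zero k
    have hk2 : ((k : ℂ) + 2) ≠ 0 := by
      have h : ((k + 2 : ℕ) : ℂ) ≠ 0 := Nat.cast_ne_zero.mpr (by omega)
      push_cast at h
      exact h
    exact (mul_ne_zero (mul_ne_zero (mul_ne_zero (by norm_num : (4:ℂ) ≠ 0) hk2) (pow_ne_zero _ hk1))
      (pow_ne_zero _ hgz₀)) h4
  · -- z₀ ≠ 0
    set Φ : ℂ → ℂ := fun z => (z - z₀) ^ k * z ^ 2 * (B z) ^ 2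
        + 4 * (z * A z - (z - z₀) * g z) *
            ((A z) ^ 2 + (z - z₀) ^ (k + 2) * (z * A z - (z - z₀) * g z)) with hΦ_def
    have hΦW : ∀ z ∈ W, Φ z = 0 := by
      intro z hz
      obtain ⟨hA', hB', hg'⟩ := hrel z hz
      have hE := heq z (hWprop z hz).1 (hWprop z hz).2.2.2
      simp only [hΦ_def]
      rw [hA', hB', hg']
      linear_combination ((z - z₀) ^ (3 * k + 6)) * hE
    have hΦc : ContinuousAt Φ z₀ := by
      simp only [hΦ_def, hA_def, hB_def]
      fun_prop
    have hlim1 : Tendsto Φ (𝓝[≠] z₀) (𝓝 (Φ z₀)) :=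
      hΦc.tendsto.mono_left nhdsWithin_le_nhds
    have hlim2 : Tendsto Φ (𝓝[≠] z₀) (𝓝 0) := by
      apply Tendsto.congr' _ tendsto_const_nhds
      filter_upwards [hWmem] with z hz using (hΦW z hz).symm
    have hval : Φ z₀ = 0 := tendsto_nhds_unique hlim1 hlim2
    simp only [hΦ_def, hA_def, hB_def, sub_self] at hval
    rw [zero_pow (show k + 2 ≠ 0 by omega)] at hval
    by_cases hk : k = 0
    · -- simple pole : conclude
      subst hk
      norm_num at hval
      -- extract g z₀ = z₀
      have h4 : (4 : ℂ) * z₀ * (g z₀) ^ 2 * (z₀ - g z₀) = 0 := by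
        linear_combination hval
      have h5 : z₀ - g z₀ = 0 := by
        rcases mul_eq_zero.mp h4 with h | h
        · exact absurd h (mul_ne_zero (mul_ne_zero (by norm_num) hz00) (pow_ne_zero _ hgz₀))
        · exact h
      have hc : g z₀ = z₀ := (sub_eq_zero.mp h5).symm
      constructor
      · rw [← hn]; norm_num
      · have hT : Tendsto g (𝓝[≠] z₀) (𝓝 z₀) := by
          have := hc1.tendsto.mono_left (nhdsWithin_le_nhds (s := {z₀}ᶜ))
          rwa [hc] at this
        apply hT.congr'
        filter_upwards [hWmem] with z hz
        rw [(hWprop z hz).2.2.1, pow_one, mul_comm, div_mul_cancel₀ _ (hWne z hz)]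
    · -- k ≥ 1 : contradiction
      exfalso
      rw [zero_pow hk] at hval
      have h4 : (4 : ℂ) * z₀ * ((k : ℂ) + 1) ^ 3 * (g z₀) ^ 3 = 0 := by
        linear_combination -hval
      have hk1 : ((k : ℂ) + 1) ≠ 0 := Nat.cast_add_one_ne_zero k
      exact (mul_ne_zero (mul_ne_zero (mul_ne_zero (by norm_num : (4:ℂ) ≠ 0) hz00) (pow_ne_zero _ hk1)) (pow_ne_zero _ hgz₀)) h4
end
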